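/- arXiv:2407.14964 — 8 statements merged into one kernel-verified Lean document; each statement's English description precedes it below -/
import Mathlib

section
/- With R, L, A* as in the projective geometry L_N(q) (R the raising matrix, L the lowering matrix, A* the diagonal matrix with entry q^{-dim y}), one has LR - RL = (q^N A* - (A*)^{-1})/(q - 1). -/
open Matrix

noncomputable section
open scoped Classical

variable (F : Type) [Field F] [Fintype F] (N : ℕ)

/-- The vertex set: all subspaces of the `N`-dimensional vector space over `GF(q)`. -/
abbrev X := Submodule F (Fin N → F)

noncomputable instance : Fintype (X F N) := Fintype.ofFinite _

/-- The dimension of a subspace. -/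
def dimS (y : X F N) : ℕ := Module.finrank F y

/-- `y` covers `z` : `z ⊆ y` and `dim y = dim z + 1`. -/
def Covers (y z : X F N) : Prop := z ≤ y ∧ dimS F N y = dimS F N z + 1

/-- The raising matrix `R`. -/
def R : Matrix (X F N) (X F N) ℂ := fun y z => if Covers F N y z then 1 else 0

/-- The lowering matrix `L = Rᵗ`. -/
def L : Matrix (X F N) (X F N) ℂ := (R F N)ᵀ

/-- The diagonal matrix `A*` with `(y,y)`-entry `q^{-dim y}`. -/
def Astar : Matrix (X F N) (X F N) ℂ :=
  Matrix.diagonal fun y => (Fintype.card F : ℂ) ^ (-(dimS F N y : ℤ))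


section Aux
open Module Submodule

/-- Number of lines in a finite vector space. -/
lemma lines_card (V : Type) [AddCommGroup V] [Module F V] [Fintype V] :
    Fintype.card {s : Submodule F V // finrank F s = 1} * (Fintype.card F - 1) + 1
      = Fintype.card F ^ finrank F V := by
  classical
  have hF : 2 ≤ Fintype.card F := Fintype.one_lt_card
  -- every line has exactly q-1 nonzero vectors
  have hline : ∀ s : Submodule F V, finrank F s = 1 →
      Fintype.card {v : s // v ≠ 0} = Fintype.card F - 1 := by
    intro s hs
    have : Fintype.card s = Fintype.card F ^ finrank F s := card_eq_pow_finrank (K := F)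
    rw [hs, pow_one] at this
    have h1 : Fintype.card {v : s // ¬ v = 0} = Fintype.card s - Fintype.card {v : s // v = 0} :=
      Fintype.card_subtype_compl _
    simp only [Ne] at *
    rw [h1, Fintype.card_subtype_eq (0 : s), this]
  -- the sigma equiv
  have e : {v : V // v ≠ 0} ≃
      Σ s : {s : Submodule F V // finrank F s = 1}, {v : s.1 // v ≠ 0} := by
    refine Equiv.symm (Equiv.ofBijective (fun p => ⟨(p.2.1 : V), ?_⟩) ⟨?_, ?_⟩)
    · simpa using p.2.2
    · rintro ⟨⟨s, hs⟩, ⟨v, hv⟩⟩ ⟨⟨t, ht⟩, ⟨w, hw⟩⟩ h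
      simp only [Subtype.mk_eq_mk] at h
      have hv0 : (v : V) ≠ 0 := by simpa using hv
      have hw0 : (w : V) ≠ 0 := by simpa using hw
      have hs' : s = Submodule.span F {(v : V)} := by
        refine (eq_of_le_of_finrank_le (Submodule.span_le.2 (by simp [v.2])) ?_).symm
        rw [hs, finrank_span_singleton hv0]
      have ht' : t = Submodule.span F {(w : V)} := by
        refine (eq_of_le_of_finrank_le (Submodule.span_le.2 (by simp [w.2])) ?_).symm
        rw [ht, finrank_span_singleton hw0]
      have hst : s = t := by rw [hs', ht', h]
      subst hst
      have : v = w := Subtype.ext h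
      subst this
      rfl
    · rintro ⟨v, hv⟩
      refine ⟨⟨⟨Submodule.span F {v}, finrank_span_singleton hv⟩,
        ⟨⟨v, Submodule.mem_span_singleton_self v⟩, by simpa using hv⟩⟩, rfl⟩
  have hcard : Fintype.card {v : V // v ≠ 0}
      = Fintype.card {s : Submodule F V // finrank F s = 1} * (Fintype.card F - 1) := by
    rw [Fintype.card_congr e, Fintype.card_sigma]
    rw [Finset.sum_congr rfl (fun s _ => hline s.1 s.2), Finset.sum_const, Finset.card_univ,
      smul_eq_mul]
  have hV : Fintype.card V = Fintype.card F ^ finrank F V := card_eq_pow_finrank (K := F)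
  have h0 : Fintype.card {v : V // v ≠ 0} = Fintype.card V - 1 := by
    have h1 : Fintype.card {v : V // ¬ v = 0} = Fintype.card V - Fintype.card {v : V // v = 0} :=
      Fintype.card_subtype_compl _
    simp only [Ne] at *
    rw [h1, Fintype.card_subtype_eq (0 : V)]
  have hVpos : 1 ≤ Fintype.card V := Fintype.card_pos
  omega

variable {F} in
lemma finrank_map_mkQ (V : Type) [AddCommGroup V] [Module F V] [FiniteDimensional F V]
    {y w : Submodule F V} (h : y ≤ w) :
    finrank F (w.map y.mkQ) + finrank F y = finrank F w := by
  classical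
  let f : w →ₗ[F] (V ⧸ y) := y.mkQ.comp w.subtype
  have hr : LinearMap.range f = w.map y.mkQ := by
    rw [LinearMap.range_comp, Submodule.range_subtype]
  have hk : LinearMap.ker f = y.comap w.subtype := by
    rw [LinearMap.ker_comp, Submodule.ker_mkQ]
  have := LinearMap.finrank_range_add_finrank_ker f
  rw [hr, hk] at this
  rw [← this, LinearEquiv.finrank_eq (Submodule.comapSubtypeEquivOfLe h)]

lemma lines_card' (V : Type) [AddCommGroup V] [Module F V] [FiniteDimensional F V] :
    Nat.card {s : Submodule F V // finrank F s = 1} * (Fintype.card F - 1) + 1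
      = Fintype.card F ^ finrank F V := by
  have : Finite V := Module.finite_of_finite F
  letI : Fintype V := Fintype.ofFinite V
  rw [Nat.card_eq_fintype_card]
  exact lines_card F V

lemma card_above (V : Type) [AddCommGroup V] [Module F V] [FiniteDimensional F V]
    (y : Submodule F V) :
    Nat.card {w : Submodule F V // y ≤ w ∧ finrank F w = finrank F y + 1}
        * (Fintype.card F - 1) + 1
      = Fintype.card F ^ (finrank F V - finrank F y) := by
  classical
  have key : ∀ s : Submodule F (V ⧸ y), y ≤ comap y.mkQ s := by
    intro s x hx
    have : y.mkQ x = 0 := by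
      rw [Submodule.mkQ_apply, Submodule.Quotient.mk_eq_zero]; exact hx
    simp [Submodule.mem_comap, this]
  have e : {s : Submodule F (V ⧸ y) // finrank F s = 1} ≃
      {w : Submodule F V // y ≤ w ∧ finrank F w = finrank F y + 1} := by
    refine ⟨fun s => ⟨comap y.mkQ s.1, key s.1, ?_⟩,
      fun w => ⟨map y.mkQ w.1, ?_⟩, fun s => ?_, fun w => ?_⟩
    · have hmap : map y.mkQ (comap y.mkQ s.1) = s.1 :=
        Submodule.map_comap_eq_self (by rw [Submodule.range_mkQ]; exact le_top)
      have := finrank_map_mkQ (F := F) V (key s.1)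
      rw [hmap, s.2] at this
      omega
    · have hc : comap y.mkQ (map y.mkQ w.1) = y ⊔ w.1 := Submodule.comap_map_mkQ y w.1
      have hsup : y ⊔ w.1 = w.1 := sup_eq_right.2 w.2.1
      have := finrank_map_mkQ (F := F) V w.2.1
      omega
    · ext1
      exact Submodule.map_comap_eq_self (by rw [Submodule.range_mkQ]; exact le_top)
    · ext1
      simp only
      rw [Submodule.comap_map_mkQ, sup_eq_right.2 w.2.1]
  rw [← Nat.card_congr e, lines_card' F (V ⧸ y)]
  congr 1
  have := Submodule.finrank_quotient_add_finrank y
  omega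

lemma card_below (V : Type) [AddCommGroup V] [Module F V] [FiniteDimensional F V]
    (y : Submodule F V) :
    Nat.card {w : Submodule F V // w ≤ y ∧ finrank F w + 1 = finrank F y}
        * (Fintype.card F - 1) + 1
      = Fintype.card F ^ finrank F y := by
  classical
  have e1 : {t : Submodule F y // finrank F t + 1 = finrank F y} ≃
      {w : Submodule F V // w ≤ y ∧ finrank F w + 1 = finrank F y} := by
    refine ⟨fun t => ⟨map y.subtype t.1, Submodule.map_subtype_le y t.1, ?_⟩,
      fun w => ⟨comap y.subtype w.1, ?_⟩, fun t => ?_, fun w => ?_⟩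
    · rw [Submodule.finrank_map_subtype_eq]; exact t.2
    · rw [LinearEquiv.finrank_eq (Submodule.comapSubtypeEquivOfLe w.2.1)]; exact w.2.2
    · ext1; simp [Submodule.comap_map_eq, Submodule.ker_subtype]
    · ext1
      simp only
      rw [Submodule.map_comap_eq, Submodule.range_subtype, inf_eq_right.2 w.2.1]
  have e2 : {s : Submodule F (Module.Dual F y) // finrank F s = 1} ≃
      {t : Submodule F y // finrank F t + 1 = finrank F y} := by
    refine ⟨fun s => ⟨s.1.dualCoannihilator, ?_⟩, fun t => ⟨t.1.dualAnnihilator, ?_⟩,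
      fun s => ?_, fun t => ?_⟩
    · have := Subspace.finrank_add_finrank_dualCoannihilator_eq s.1
      rw [s.2] at this
      omega
    · obtain ⟨t, ht⟩ := t
      have h1 : finrank F ((↥y) ⧸ t) = finrank F t.dualAnnihilator :=
        LinearEquiv.finrank_eq (Subspace.quotEquivAnnihilator t)
      have h2 := Submodule.finrank_quotient_add_finrank t
      show Module.finrank F ↥t.dualAnnihilator = 1
      omega
    · ext1
      exact Subspace.dualCoannihilator_dualAnnihilator_eq
    · ext1
      exact Subspace.dualAnnihilator_dualCoannihilator_eq
  rw [← Nat.card_congr e1, ← Nat.card_congr e2, lines_card' F (Module.Dual F y)]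
  rw [Subspace.dual_finrank_eq]

variable {F} in
lemma offdiag_card_eq (V : Type) [AddCommGroup V] [Module F V] [FiniteDimensional F V]
    {y z : Submodule F V} (hyz : y ≠ z) :
    Nat.card {w : Submodule F V //
        (y ≤ w ∧ finrank F w = finrank F y + 1) ∧ (z ≤ w ∧ finrank F w = finrank F z + 1)}
      = Nat.card {w : Submodule F V //
        (w ≤ y ∧ finrank F y = finrank F w + 1) ∧ (w ≤ z ∧ finrank F z = finrank F w + 1)} := by
  classical
  have hmod := Submodule.finrank_sup_add_finrank_inf_eq y z
  -- any common cover is y ⊔ z, and forces the dimension condition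
  have hAbove : ∀ w : Submodule F V,
      ((y ≤ w ∧ finrank F w = finrank F y + 1) ∧ (z ≤ w ∧ finrank F w = finrank F z + 1)) →
      w = y ⊔ z ∧ finrank F y = finrank F z ∧ finrank F ↥(y ⊔ z) = finrank F y + 1 := by
    rintro w ⟨⟨hyw, hwy⟩, ⟨hzw, hwz⟩⟩
    have hk : finrank F y = finrank F z := by omega
    have hlt : y < y ⊔ z := by
      rcases lt_or_eq_of_le (le_sup_left : y ≤ y ⊔ z) with h | h
      · exact h
      · exfalso
        have hz : z ≤ y := by rw [h]; exact le_sup_right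
        exact hyz (Submodule.eq_of_le_of_finrank_le hz (le_of_eq hk)).symm
    have h1 : finrank F y < finrank F ↥(y ⊔ z) := Submodule.finrank_lt_finrank_of_lt hlt
    have h2 : finrank F ↥(y ⊔ z) ≤ finrank F w := Submodule.finrank_mono (sup_le hyw hzw)
    have hr : finrank F ↥(y ⊔ z) = finrank F y + 1 := by omega
    refine ⟨(Submodule.eq_of_le_of_finrank_le (sup_le hyw hzw) (by omega)).symm, hk, hr⟩
  have hBelow : ∀ w : Submodule F V,
      ((w ≤ y ∧ finrank F y = finrank F w + 1) ∧ (w ≤ z ∧ finrank F z = finrank F w + 1)) →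
      w = y ⊓ z ∧ finrank F y = finrank F z ∧ finrank F ↥(y ⊓ z) + 1 = finrank F y := by
    rintro w ⟨⟨hwy, hyw⟩, ⟨hwz, hzw⟩⟩
    have hk : finrank F y = finrank F z := by omega
    have hlt : y ⊓ z < y := by
      rcases lt_or_eq_of_le (inf_le_left : y ⊓ z ≤ y) with h | h
      · exact h
      · exfalso
        have hyz' : y ≤ z := by rw [← h]; exact inf_le_right
        exact hyz (Submodule.eq_of_le_of_finrank_le hyz' (le_of_eq hk.symm))
    have h1 : finrank F ↥(y ⊓ z) < finrank F y := Submodule.finrank_lt_finrank_of_lt hlt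
    have h2 : finrank F w ≤ finrank F ↥(y ⊓ z) := Submodule.finrank_mono (le_inf hwy hwz)
    have hr : finrank F ↥(y ⊓ z) + 1 = finrank F y := by omega
    exact ⟨Submodule.eq_of_le_of_finrank_le (le_inf hwy hwz) (by omega), hk, hr⟩
  by_cases hC : finrank F y = finrank F z ∧ finrank F ↥(y ⊔ z) = finrank F y + 1
  · have hC2 : finrank F ↥(y ⊓ z) + 1 = finrank F y := by omega
    have c1 : Nat.card {w : Submodule F V //
        (y ≤ w ∧ finrank F w = finrank F y + 1) ∧ (z ≤ w ∧ finrank F w = finrank F z + 1)} = 1 := by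
      rw [Nat.card_eq_one_iff_unique]
      constructor
      · constructor
        intro a b
        ext1
        rw [(hAbove a.1 a.2).1, (hAbove b.1 b.2).1]
      · exact ⟨⟨y ⊔ z, ⟨le_sup_left, hC.2⟩, ⟨le_sup_right, by rw [hC.2]; omega⟩⟩⟩
    have c2 : Nat.card {w : Submodule F V //
        (w ≤ y ∧ finrank F y = finrank F w + 1) ∧ (w ≤ z ∧ finrank F z = finrank F w + 1)} = 1 := by
      rw [Nat.card_eq_one_iff_unique]
      constructor
      · constructor
        intro a b
        ext1
        rw [(hBelow a.1 a.2).1, (hBelow b.1 b.2).1]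
      · exact ⟨⟨y ⊓ z, ⟨inf_le_left, by omega⟩, ⟨inf_le_right, by omega⟩⟩⟩
    rw [c1, c2]
  · have c1 : IsEmpty {w : Submodule F V //
        (y ≤ w ∧ finrank F w = finrank F y + 1) ∧ (z ≤ w ∧ finrank F w = finrank F z + 1)} := by
      constructor
      rintro ⟨w, hw⟩
      exact hC ⟨(hAbove w hw).2.1, (hAbove w hw).2.2⟩
    have c2 : IsEmpty {w : Submodule F V //
        (w ≤ y ∧ finrank F y = finrank F w + 1) ∧ (w ≤ z ∧ finrank F z = finrank F w + 1)} := by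
      constructor
      rintro ⟨w, hw⟩
      obtain ⟨-, hk, hr⟩ := hBelow w hw
      exact hC ⟨hk, by omega⟩
    rw [Nat.card_of_isEmpty, Nat.card_of_isEmpty]

end Aux

open Module Submodule in
/-- `LR - RL = (q^N A* - (A*)⁻¹)/(q-1)`. -/
theorem stmt_4 (hN : 1 ≤ N) :
    L F N * R F N - R F N * L F N =
      ((Fintype.card F : ℂ) - 1)⁻¹ •
        (((Fintype.card F : ℂ) ^ N) • Astar F N - (Astar F N)⁻¹) := by
  classical
  have hq2 : 2 ≤ Fintype.card F := Fintype.one_lt_card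
  set q : ℕ := Fintype.card F with hq
  have hq0 : (q : ℂ) ≠ 0 := Nat.cast_ne_zero.2 (by omega)
  have hq1 : (q : ℂ) - 1 ≠ 0 := by
    intro h
    have h1 : (q : ℂ) = 1 := by rwa [sub_eq_zero] at h
    have := Nat.cast_eq_one.mp h1
    omega
  have hAinv : (Astar F N)⁻¹ = Matrix.diagonal (fun w => (q : ℂ) ^ (dimS F N w : ℤ)) := by
    apply Matrix.inv_eq_right_inv
    rw [Astar, Matrix.diagonal_mul_diagonal]
    have h : (fun w : X F N => (q : ℂ) ^ (-(dimS F N w : ℤ)) * (q : ℂ) ^ (dimS F N w : ℤ))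
        = fun _ => (1 : ℂ) := by
      funext w
      rw [← zpow_add₀ hq0]
      simp
    rw [h, Matrix.diagonal_one]
  have hdimV : finrank F (Fin N → F) = N := Module.finrank_fin_fun F
  ext y z
  have hsum1 : ∑ w, R F N w y * R F N w z
      = (Nat.card {w : X F N // Covers F N w y ∧ Covers F N w z} : ℂ) := by
    have h : ∀ w, R F N w y * R F N w z
        = if (Covers F N w y ∧ Covers F N w z) then (1 : ℂ) else 0 := by
      intro w
      by_cases h1 : Covers F N w y <;> by_cases h2 : Covers F N w z <;> simp [R, h1, h2]
    rw [Finset.sum_congr rfl (fun w _ => h w), Finset.sum_boole,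
      Nat.card_eq_fintype_card, Fintype.card_subtype]
  have hsum2 : ∑ w, R F N y w * R F N z w
      = (Nat.card {w : X F N // Covers F N y w ∧ Covers F N z w} : ℂ) := by
    have h : ∀ w, R F N y w * R F N z w
        = if (Covers F N y w ∧ Covers F N z w) then (1 : ℂ) else 0 := by
      intro w
      by_cases h1 : Covers F N y w <;> by_cases h2 : Covers F N z w <;> simp [R, h1, h2]
    rw [Finset.sum_congr rfl (fun w _ => h w), Finset.sum_boole,
      Nat.card_eq_fintype_card, Fintype.card_subtype]
  simp only [hAinv]
  simp only [Matrix.sub_apply, Matrix.mul_apply, L, Matrix.transpose_apply, Matrix.smul_apply,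
    smul_eq_mul, Astar, Matrix.diagonal_apply]
  rw [hsum1, hsum2]
  by_cases hyz : y = z
  · subst hyz
    simp only [if_pos rfl, eq_self_iff_true, if_true]
    set k : ℕ := dimS F N y with hk
    have hkN : k ≤ N := by
      have := Submodule.finrank_le y
      rw [hdimV] at this
      exact this
    have e1 : {w : X F N // Covers F N w y ∧ Covers F N w y} ≃
        {w : X F N // y ≤ w ∧ finrank F w = finrank F y + 1} :=
      Equiv.subtypeEquivRight (fun w => by simp [Covers, dimS])
    have e2 : {w : X F N // Covers F N y w ∧ Covers F N y w} ≃
        {w : X F N // w ≤ y ∧ finrank F w + 1 = finrank F y} :=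
      Equiv.subtypeEquivRight (fun w => by simp [Covers, dimS, eq_comm])
    have HA := card_above F (Fin N → F) y
    have HB := card_below F (Fin N → F) y
    rw [hdimV] at HA
    rw [← hq] at HA HB
    rw [Nat.card_congr e1, Nat.card_congr e2]
    set Na := Nat.card {w : X F N // y ≤ w ∧ finrank F w = finrank F y + 1} with hNa
    set Nb := Nat.card {w : X F N // w ≤ y ∧ finrank F w + 1 = finrank F y} with hNb
    have hfr : finrank F y = k := rfl
    rw [hfr] at HA HB
    have HA' : (Na : ℂ) * ((q : ℂ) - 1) + 1 = (q : ℂ) ^ (N - k) := by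
      have := congrArg (Nat.cast (R := ℂ)) HA
      push_cast [Nat.cast_sub (by omega : 1 ≤ q)] at this
      linear_combination this
    have HB' : (Nb : ℂ) * ((q : ℂ) - 1) + 1 = (q : ℂ) ^ k := by
      have := congrArg (Nat.cast (R := ℂ)) HB
      push_cast [Nat.cast_sub (by omega : 1 ≤ q)] at this
      linear_combination this
    have hzp1 : (q : ℂ) ^ (-(k : ℤ)) = ((q : ℂ) ^ k)⁻¹ := by
      rw [_root_.zpow_neg, zpow_natCast]
    have hsplit : (q : ℂ) ^ N = (q : ℂ) ^ (N - k) * (q : ℂ) ^ k := by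
      rw [← pow_add]
      congr 1
      omega
    rw [hzp1, hsplit, zpow_natCast]
    have hpk : ((q : ℂ) ^ k) ≠ 0 := pow_ne_zero _ hq0
    rw [mul_inv_cancel_right₀ hpk, ← HA', ← HB']
    have harith : (Na : ℂ) * ((q : ℂ) - 1) + 1 - ((Nb : ℂ) * ((q : ℂ) - 1) + 1)
        = ((q : ℂ) - 1) * ((Na : ℂ) - (Nb : ℂ)) := by ring
    rw [harith, inv_mul_cancel_left₀ hq1]
  · rw [if_neg hyz, if_neg hyz]
    have e1 : {w : X F N // Covers F N w y ∧ Covers F N w z} ≃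
        {w : X F N // (y ≤ w ∧ finrank F w = finrank F y + 1) ∧
          (z ≤ w ∧ finrank F w = finrank F z + 1)} :=
      Equiv.subtypeEquivRight (fun w => by simp [Covers, dimS, and_assoc, and_left_comm])
    have e2 : {w : X F N // Covers F N y w ∧ Covers F N z w} ≃
        {w : X F N // (w ≤ y ∧ finrank F y = finrank F w + 1) ∧
          (w ≤ z ∧ finrank F z = finrank F w + 1)} :=
      Equiv.subtypeEquivRight (fun w => by simp [Covers, dimS])
    rw [Nat.card_congr e1, Nat.card_congr e2, offdiag_card_eq (Fin N → F) hyz]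
    ring
end
end

section
/- Define A_+ = (A*)^{-1}/(q-1) + φ^{-1} R and A_- = (A*)^{-1}/(q-1) - φ (A*)^{-1} L, where φ > 0. Then q A_- A* - A* A_- = I, q A* A_+ - A_+ A* = I, and q A_+ A_- - A_- A_+ = (q^N/(q-1)) I. -/
open Matrix

noncomputable section
open scoped Classical

variable (F : Type) [Field F] [Fintype F] (N : ℕ)

/-!
Write `D = (A*)⁻¹ = diag(q^{dim y})`. Since `R` raises and `L` lowers the dimension by one,
`A* R = q⁻¹ R A*` and `L A* = q⁻¹ A* L` (and likewise with `D` and `q`); the first two relations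
follow from these alone, and the third reduces to `D L R - q R D L = (q^N - D²)/(q-1)`.
The `(y, z)` entries of `D L R` and `q R D L` are `q^{dim y}` times the numbers of common upper
and of common lower covers of `y` and `z`. For `y ≠ z` these numbers agree because the subspace
lattice is modular; for `y = z` they count the lines of `V/y` and the hyperplanes of `y`, that is
`(q^{N-k} - 1)/(q - 1)` and `(q^k - 1)/(q - 1)` with `k = dim y`.
-/

section ModularLattice

variable {α : Type*} [Lattice α] [IsModularLattice α]

theorem card_commonUpperCovers_eq_card_commonLowerCovers {a b : α} (hab : a ≠ b) :
    Nat.card {c // a ⋖ c ∧ b ⋖ c} = Nat.card {c // c ⋖ a ∧ c ⋖ b} := by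
  have sup_eq {c : α} (h : a ⋖ c ∧ b ⋖ c) : c = a ⊔ b := (h.1.wcovBy.sup_eq h.2.wcovBy hab).symm
  have inf_eq {c : α} (h : c ⋖ a ∧ c ⋖ b) : c = a ⊓ b := (h.1.wcovBy.inf_eq h.2.wcovBy hab).symm
  refine Nat.card_congr
    { toFun c := ⟨a ⊓ b, ?_, ?_⟩
      invFun c := ⟨a ⊔ b, ?_, ?_⟩
      left_inv c := Subtype.ext (sup_eq c.2).symm
      right_inv c := Subtype.ext (inf_eq c.2).symm }
  · exact inf_covBy_of_covBy_sup_right (sup_eq c.2 ▸ c.2.2)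
  · exact inf_covBy_of_covBy_sup_left (sup_eq c.2 ▸ c.2.1)
  · exact covBy_sup_of_inf_covBy_right (inf_eq c.2 ▸ c.2.2)
  · exact covBy_sup_of_inf_covBy_left (inf_eq c.2 ▸ c.2.1)

end ModularLattice

section Subspaces

variable {K V : Type*} [DivisionRing K] [AddCommGroup V] [Module K V]

theorem Submodule.covBy_iff_finrank_eq_add_one [FiniteDimensional K V] {w y : Submodule K V} :
    w ⋖ y ↔ w ≤ y ∧ Module.finrank K y = Module.finrank K w + 1 := by
  by_cases hwy : w ≤ y
  · have hquot := Submodule.finrank_quotient_add_finrank (Submodule.comap y.subtype w)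
    rw [(Submodule.comapSubtypeEquivOfLe hwy).finrank_eq] at hquot
    rw [covBy_iff_quot_is_simple hwy, isSimpleModule_iff_finrank_eq_one]
    simp only [hwy, true_and]
    omega
  · exact iff_of_false (fun h => hwy h.le) (fun h => hwy h.1)

variable [Finite K] [FiniteDimensional K V]

theorem Submodule.card_atoms_mul_add_one :
    Nat.card {u : Submodule K V // IsAtom u} * (Nat.card K - 1) + 1
      = Nat.card K ^ Module.finrank K V := by
  have : Finite V := Module.finite_of_finite K
  have e : {u : Submodule K V // IsAtom u} ≃ Projectivization K V :=
    (Equiv.subtypeEquivRight fun _ => Submodule.isAtom_iff_finrank_eq_one).trans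
      (Projectivization.equivSubmodule K V).symm
  rw [Nat.card_congr e, ← Projectivization.card', Module.natCard_eq_pow_finrank (K := K)]

theorem Submodule.card_upperCovers_mul_add_one (y : Submodule K V) :
    Nat.card {w // y ⋖ w} * (Nat.card K - 1) + 1
      = Nat.card K ^ (Module.finrank K V - Module.finrank K y) := by
  have e : {w // y ⋖ w} ≃ {u : Submodule K (V ⧸ y) // IsAtom u} :=
    { toFun w := ⟨(Submodule.comapMkQRelIso y).symm ⟨w, w.2.le⟩, by
        rw [OrderIso.isAtom_iff, ← covBy_iff_atom_Ici]; exact w.2⟩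
      invFun u := ⟨Submodule.comapMkQRelIso y u, by
        rw [covBy_iff_atom_Ici (Submodule.comapMkQRelIso y u).2, OrderIso.isAtom_iff]; exact u.2⟩
      left_inv w := by simp
      right_inv u := Subtype.ext ((Submodule.comapMkQRelIso y).symm_apply_apply u.1) }
  have hquot := Submodule.finrank_quotient_add_finrank y
  rw [Nat.card_congr e, card_atoms_mul_add_one]
  congr 1
  omega

end Subspaces

section Hyperplanes

variable {K V : Type*} [Field K] [Finite K] [AddCommGroup V] [Module K V]

-- The hyperplanes of `y` are the annihilators of the lines of its dual.
theorem Submodule.card_lowerCovers_mul_add_one (y : Submodule K V) [FiniteDimensional K y] :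
    Nat.card {w // w ⋖ y} * (Nat.card K - 1) + 1 = Nat.card K ^ Module.finrank K y := by
  let dual := Subspace.orderIsoFiniteDimensional (K := K) (V := y)
  have e : {w // w ⋖ y} ≃ {u : Submodule K (Module.Dual K y) // IsAtom u} :=
    { toFun w := ⟨OrderDual.ofDual (dual (y.mapIic.symm ⟨w, w.2.le⟩)), by
        rw [← isCoatom_dual_iff_isAtom, OrderDual.toDual_ofDual, OrderIso.isCoatom_iff,
          OrderIso.isCoatom_iff, ← covBy_iff_coatom_Iic]; exact w.2⟩
      invFun u := ⟨y.mapIic (dual.symm (OrderDual.toDual u)), by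
        rw [covBy_iff_coatom_Iic (y.mapIic _).2, OrderIso.isCoatom_iff, OrderIso.isCoatom_iff]
        exact u.2⟩
      left_inv w := by simp
      right_inv u := Subtype.ext <| by
        change OrderDual.ofDual (dual (y.mapIic.symm (y.mapIic _))) = _
        simp }
  rw [Nat.card_congr e, Submodule.card_atoms_mul_add_one, Subspace.dual_finrank_eq]

end Hyperplanes

section QCommutator

variable {K A : Type*} [Field K] [Ring A] [Algebra K A]

def qComm (q : K) (x y : A) : A := q • (x * y) - y * x

variable {a d l r : A} {q : K}

theorem qComm_lowering_eq_one (hda : d * a = 1) (had : a * d = 1) (hq : q ≠ 0) (hq1 : q - 1 ≠ 0)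
    (hl : l * a = q⁻¹ • (a * l)) (φ : K) :
    qComm q ((q - 1)⁻¹ • d - φ • (d * l)) a = 1 := by
  have hdla : d * l * a = q⁻¹ • l := by
    rw [mul_assoc, hl, mul_smul_comm, ← mul_assoc, hda, one_mul]
  simp only [qComm, sub_mul, mul_sub, smul_mul_assoc, mul_smul_comm, hdla, hda, had,
    ← mul_assoc, one_mul]
  match_scalars
  · field_simp
  · field_simp
    ring

theorem qComm_raising_eq_one (hda : d * a = 1) (had : a * d = 1) (hq : q ≠ 0) (hq1 : q - 1 ≠ 0)
    (hr : a * r = q⁻¹ • (r * a)) (φ : K) :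
    qComm q a ((q - 1)⁻¹ • d + φ⁻¹ • r) = 1 := by
  simp only [qComm, add_mul, mul_add, smul_mul_assoc, mul_smul_comm, hr, hda, had]
  match_scalars
  · field_simp
  · field_simp
    ring

theorem qComm_raising_lowering_eq_smul_one (hr : d * r = q • (r * d)) (hl : l * d = q • (d * l))
    {Q : K} (hlr : d * (l * r) - q • (r * (d * l)) = (q - 1)⁻¹ • (Q • 1 - d * d))
    {φ : K} (hφ : φ ≠ 0) :
    qComm q ((q - 1)⁻¹ • d + φ⁻¹ • r) ((q - 1)⁻¹ • d - φ • (d * l)) = (Q / (q - 1)) • 1 := by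
  have hdld : d * l * d = q • (d * (d * l)) := by rw [mul_assoc, hl, mul_smul_comm]
  have hdlr : d * l * r = q • (r * (d * l)) + (q - 1)⁻¹ • (Q • 1 - d * d) := by
    rw [← hlr, mul_assoc]
    abel
  simp only [qComm, add_mul, sub_mul, mul_add, mul_sub, smul_mul_assoc, mul_smul_comm, hr, hdld,
    hdlr, ← mul_assoc]
  match_scalars <;> field_simp <;> ring

end QCommutator

theorem card_sub_one_ne_zero (α : Type*) [Fintype α] [Nontrivial α] :
    (Fintype.card α : ℂ) - 1 ≠ 0 :=
  sub_ne_zero.mpr (by exact_mod_cast Fintype.one_lt_card.ne')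

section GradedMatrix

variable {ι R : Type*} [Fintype ι] [DecidableEq ι] [CommSemiring R]

theorem Matrix.diagonal_pow_mul_of_raises (c : R) (g : ι → ℕ) {M : Matrix ι ι R}
    (hM : ∀ i j, M i j ≠ 0 → g i = g j + 1) :
    diagonal (fun i => c ^ g i) * M = c • (M * diagonal fun i => c ^ g i) := by
  ext i j
  rw [diagonal_mul, smul_apply, mul_diagonal, smul_eq_mul]
  by_cases h : M i j = 0
  · simp [h]
  · rw [hM i j h, pow_succ]
    ring

end GradedMatrix

theorem diagonal_pow_dimS_mul_R (c : ℂ) :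
    diagonal (fun y => c ^ dimS F N y) * R F N = c • (R F N * diagonal fun y => c ^ dimS F N y) :=
  diagonal_pow_mul_of_raises c _ fun _ _ h => by
    by_contra h'
    exact h (if_neg fun hc => h' hc.2)

theorem L_mul_diagonal_pow_dimS (c : ℂ) :
    L F N * diagonal (fun y => c ^ dimS F N y)
      = c • (diagonal (fun y => c ^ dimS F N y) * L F N) := by
  simpa [L, transpose_mul] using congrArg transpose (diagonal_pow_dimS_mul_R F N c)

theorem Astar_eq_diagonal_pow :
    Astar F N = diagonal fun y => (Fintype.card F : ℂ)⁻¹ ^ dimS F N y := by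
  simp [Astar, _root_.zpow_neg, inv_pow]

theorem Astar_mul_diagonal_pow :
    Astar F N * diagonal (fun y => (Fintype.card F : ℂ) ^ dimS F N y) = 1 := by
  have hq : (Fintype.card F : ℂ) ≠ 0 := Nat.cast_ne_zero.mpr Fintype.card_ne_zero
  rw [Astar_eq_diagonal_pow, diagonal_mul_diagonal, ← diagonal_one]
  simp_rw [← mul_pow, inv_mul_cancel₀ hq, one_pow]

theorem inv_Astar : (Astar F N)⁻¹ = diagonal fun y => (Fintype.card F : ℂ) ^ dimS F N y :=
  inv_eq_right_inv (Astar_mul_diagonal_pow F N)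

section Entries

variable {F N}

theorem L_mul_R_apply (y z : X F N) :
    (L F N * R F N) y z = Nat.card {w : X F N // y ⋖ w ∧ z ⋖ w} := by
  have hcov (y z : X F N) : Covers F N y z ↔ z ⋖ y :=
    Submodule.covBy_iff_finrank_eq_add_one.symm
  rw [mul_apply, Nat.card_eq_fintype_card, Fintype.card_subtype, Finset.card_filter]
  push_cast
  refine Finset.sum_congr rfl fun w _ => ?_
  simp only [L, R, transpose_apply, hcov, ite_zero_mul_ite_zero, mul_one, ite_and]

theorem R_mul_inv_Astar_mul_L_apply (y z : X F N) :
    (Fintype.card F : ℂ) * (R F N * ((Astar F N)⁻¹ * L F N)) y z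
      = (Fintype.card F : ℂ) ^ dimS F N y * Nat.card {w : X F N // w ⋖ y ∧ w ⋖ z} := by
  have hcov (y z : X F N) : Covers F N y z ↔ z ⋖ y :=
    Submodule.covBy_iff_finrank_eq_add_one.symm
  rw [mul_apply, Finset.mul_sum, Nat.card_eq_fintype_card, Fintype.card_subtype,
    Finset.card_eq_sum_ones, Nat.cast_sum, Finset.mul_sum, Finset.sum_filter]
  refine Finset.sum_congr rfl fun w _ => ?_
  simp only [inv_Astar, diagonal_mul, L, R, transpose_apply, hcov]
  by_cases hw : w ⋖ y ∧ w ⋖ z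
  · have hdim : dimS F N y = dimS F N w + 1 :=
      (Submodule.covBy_iff_finrank_eq_add_one.mp hw.1).2
    simp only [hw, and_self, if_true, hdim, pow_succ]
    ring
  · rw [if_neg hw]
    rcases not_and_or.mp hw with hw | hw <;> simp [hw]

theorem card_upperCovers_sub_card_lowerCovers (y : X F N) :
    (Fintype.card F : ℂ) ^ dimS F N y * Nat.card {w // y ⋖ w}
        - (Fintype.card F : ℂ) ^ dimS F N y * Nat.card {w // w ⋖ y}
      = ((Fintype.card F : ℂ) - 1)⁻¹
          * ((Fintype.card F : ℂ) ^ N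
            - (Fintype.card F : ℂ) ^ dimS F N y * (Fintype.card F : ℂ) ^ dimS F N y) := by
  have cast_count {n m : ℕ} (h : n * (Nat.card F - 1) + 1 = Nat.card F ^ m) :
      (n : ℂ) * ((Fintype.card F : ℂ) - 1) + 1 = (Fintype.card F : ℂ) ^ m := by
    -- needed by `exact_mod_cast` to cast the truncated subtraction `Nat.card F - 1`
    have : 1 ≤ Nat.card F := Nat.card_pos
    rw [← Nat.card_eq_fintype_card]
    exact_mod_cast congrArg (Nat.cast : ℕ → ℂ) h
  have hup : (Nat.card {w // y ⋖ w} : ℂ) * ((Fintype.card F : ℂ) - 1) + 1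
      = (Fintype.card F : ℂ) ^ (N - dimS F N y) := by
    have h := Submodule.card_upperCovers_mul_add_one y
    rw [Module.finrank_fin_fun] at h
    exact cast_count h
  have hlow : (Nat.card {w // w ⋖ y} : ℂ) * ((Fintype.card F : ℂ) - 1) + 1
      = (Fintype.card F : ℂ) ^ dimS F N y :=
    cast_count (Submodule.card_lowerCovers_mul_add_one y)
  have hsplit : (Fintype.card F : ℂ) ^ (N - dimS F N y) * (Fintype.card F : ℂ) ^ dimS F N y
      = (Fintype.card F : ℂ) ^ N :=
    pow_sub_mul_pow _ ((Submodule.finrank_le y).trans_eq (Module.finrank_fin_fun F))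
  rw [eq_inv_mul_iff_mul_eq₀ (card_sub_one_ne_zero F)]
  linear_combination (Fintype.card F : ℂ) ^ dimS F N y * (hup - hlow) + hsplit

end Entries

theorem inv_Astar_mul_L_mul_R_sub :
    (Astar F N)⁻¹ * (L F N * R F N) - (Fintype.card F : ℂ) • (R F N * ((Astar F N)⁻¹ * L F N))
      = ((Fintype.card F : ℂ) - 1)⁻¹
          • ((Fintype.card F : ℂ) ^ N • 1 - (Astar F N)⁻¹ * (Astar F N)⁻¹) := by
  ext y z
  rw [Matrix.sub_apply, Matrix.smul_apply, smul_eq_mul, R_mul_inv_Astar_mul_L_apply, inv_Astar,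
    diagonal_mul, L_mul_R_apply, diagonal_mul_diagonal, Matrix.smul_apply, Matrix.sub_apply,
    Matrix.smul_apply, one_apply, diagonal_apply]
  rcases eq_or_ne y z with rfl | hyz
  · simpa using card_upperCovers_sub_card_lowerCovers y
  · rw [card_commonUpperCovers_eq_card_commonLowerCovers hyz]
    simp [hyz]

theorem stmt_7 (φ : ℝ) (hφ : 0 < φ) :
    let q : ℂ := (Fintype.card F : ℂ)
    let Ap : Matrix (X F N) (X F N) ℂ := (q - 1)⁻¹ • (Astar F N)⁻¹ + (φ : ℂ)⁻¹ • R F N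
    let Am : Matrix (X F N) (X F N) ℂ :=
      (q - 1)⁻¹ • (Astar F N)⁻¹ - (φ : ℂ) • ((Astar F N)⁻¹ * L F N)
    q • (Am * Astar F N) - Astar F N * Am = 1 ∧
    q • (Astar F N * Ap) - Ap * Astar F N = 1 ∧
    q • (Ap * Am) - Am * Ap = (q ^ N / (q - 1)) • (1 : Matrix (X F N) (X F N) ℂ) := by
  intro q Ap Am
  have hq : q ≠ 0 := Nat.cast_ne_zero.mpr Fintype.card_ne_zero
  have hq1 := card_sub_one_ne_zero F
  have had : Astar F N * (Astar F N)⁻¹ = 1 := by rw [inv_Astar]; exact Astar_mul_diagonal_pow F N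
  have hda : (Astar F N)⁻¹ * Astar F N = 1 := mul_eq_one_comm.mp had
  refine ⟨qComm_lowering_eq_one hda had hq hq1 ?_ _, qComm_raising_eq_one hda had hq hq1 ?_ _,
    qComm_raising_lowering_eq_smul_one ?_ ?_ (inv_Astar_mul_L_mul_R_sub F N) ?_⟩
  · rw [Astar_eq_diagonal_pow]; exact L_mul_diagonal_pow_dimS F N _
  · rw [Astar_eq_diagonal_pow]; exact diagonal_pow_dimS_mul_R F N _
  · rw [inv_Astar]; exact diagonal_pow_dimS_mul_R F N _
  · rw [inv_Astar]; exact L_mul_diagonal_pow_dimS F N _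
  · exact_mod_cast hφ.ne'

end
end

section
/- Suppose operators Y, Y^{-1}, A⁻, A⁺ on a vector space satisfy q A⁻ Y - Y A⁻ = I, q Y A⁺ - A⁺ Y = I, and q A⁺ A⁻ - A⁻ A⁺ = c I for a scalar c. Then A = φ A⁻ - A⁺ and Y satisfy the q-Serre relation Y³A - (β+1)Y²AY + (β+1)YAY² - AY³ = 0, where β = q + q^{-1}. -/
lemma serre_aux (Alg : Type*) [Ring Alg] [Algebra ℂ Alg] (r s : ℂ) (hr : r ≠ 0)
    (Y x : Alg) (h : Y * x = r • (x * Y) + s • (1 : Alg)) :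
    Y ^ 3 * x - (r + r⁻¹ + 1) • (Y ^ 2 * x * Y) + (r + r⁻¹ + 1) • (Y * x * Y ^ 2)
      - x * Y ^ 3 = 0 := by
  have e2 : Y * (Y * x) = (r ^ 2) • (x * (Y * Y)) + ((r + 1) * s) • Y := by
    rw [h, mul_add, mul_smul_comm, mul_smul_comm, mul_one, ← mul_assoc, h]
    simp only [mul_add, add_mul, smul_add, mul_smul_comm, smul_mul_assoc, smul_smul,
      mul_one, one_mul, mul_assoc]
    match_scalars <;> ring
  have e3 : Y ^ 3 * x = (r ^ 3) • (x * (Y * (Y * Y)))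
      + ((r ^ 2 + r + 1) * s) • (Y * Y) := by
    have g : Y ^ 3 * x = Y * (Y * (Y * x)) := by noncomm_ring
    rw [g, e2, mul_add, mul_smul_comm, mul_smul_comm, ← mul_assoc, h]
    simp only [mul_add, add_mul, smul_add, mul_smul_comm, smul_mul_assoc, smul_smul,
      mul_one, one_mul, mul_assoc]
    match_scalars <;> ring
  have e2' : Y ^ 2 * x * Y = (r ^ 2) • (x * (Y * (Y * Y))) + ((r + 1) * s) • (Y * Y) := by
    have g : Y ^ 2 * x * Y = Y * (Y * x) * Y := by noncomm_ring
    rw [g, e2]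
    simp only [add_mul, smul_mul_assoc, mul_assoc]
  have e1' : Y * x * Y ^ 2 = r • (x * (Y * (Y * Y))) + s • (Y * Y) := by
    have g : Y * x * Y ^ 2 = Y * x * (Y * Y) := by noncomm_ring
    rw [g, h]
    simp only [add_mul, smul_mul_assoc, one_mul, mul_assoc]
  have g4 : x * Y ^ 3 = x * (Y * (Y * Y)) := by noncomm_ring
  rw [e3, e2', e1', g4]
  match_scalars <;> field_simp <;> ring

/-- If `Y` (invertible), `A⁻`, `A⁺` in an associative unital `ℂ`-algebra satisfy
`q A⁻ Y - Y A⁻ = 1`, `q Y A⁺ - A⁺ Y = 1`, `q A⁺ A⁻ - A⁻ A⁺ = c·1`, then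
`A = φ A⁻ - A⁺` and `Y` satisfy the `q`-Serre relation
`Y³A - (β+1)Y²AY + (β+1)YAY² - AY³ = 0`, where `β = q + q⁻¹`. -/
theorem stmt_8 (Alg : Type*) [Ring Alg] [Algebra ℂ Alg]
    (q φ c : ℂ) (hq0 : q ≠ 0) (hq1 : q ≠ 1) (hqm1 : q ≠ -1)
    (Y Am Ap : Alg) (hY : IsUnit Y)
    (h1 : q • (Am * Y) - Y * Am = 1)
    (h2 : q • (Y * Ap) - Ap * Y = 1)
    (h3 : q • (Ap * Am) - Am * Ap = c • (1 : Alg)) :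
    let A : Alg := φ • Am - Ap
    let β : ℂ := q + q⁻¹
    Y ^ 3 * A - (β + 1) • (Y ^ 2 * A * Y) + (β + 1) • (Y * A * Y ^ 2) - A * Y ^ 3 = 0 := by
  intro A β
  have hq0' : q⁻¹ ≠ 0 := inv_ne_zero hq0
  have hm : Y * Am = q • (Am * Y) + (-1 : ℂ) • (1 : Alg) := by
    rw [neg_smul, one_smul, ← h1]; abel
  have hp : Y * Ap = q⁻¹ • (Ap * Y) + q⁻¹ • (1 : Alg) := by
    refine smul_right_injective Alg hq0 ?_
    show q • (Y * Ap) = q • (q⁻¹ • (Ap * Y) + q⁻¹ • (1 : Alg))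
    rw [smul_add, smul_smul, smul_smul, mul_inv_cancel₀ hq0, one_smul, one_smul, ← h2]
    abel
  have Hm := serre_aux Alg q (-1) hq0 Y Am hm
  have Hp := serre_aux Alg q⁻¹ q⁻¹ hq0' Y Ap hp
  rw [inv_inv] at Hp
  have hβ : β + 1 = q + q⁻¹ + 1 := rfl
  show Y ^ 3 * A - (β + 1) • (Y ^ 2 * A * Y) + (β + 1) • (Y * A * Y ^ 2) - A * Y ^ 3 = 0
  simp only [A, mul_sub, sub_mul, mul_smul_comm, smul_mul_assoc, smul_sub]
  rw [hβ]
  have hβ' : q⁻¹ + q + 1 = q + q⁻¹ + 1 := by ring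
  rw [hβ'] at Hp
  linear_combination (norm := module) φ • Hm - Hp
end

section
/- For the matrix A = R + φ(A*)^{-1}L + ((φ-1)/(q-1))(A*)^{-1} and A* on the projective geometry L_N(q), the tridiagonal relation A*³A - (β+1)A*²AA* + (β+1)A*AA*² - AA*³ = 0 holds, where β = q + q^{-1}. -/
open Matrix

noncomputable section
open scoped Classical

variable (F : Type) [Field F] [Fintype F] (N : ℕ)

/-- For `A = R + φ(A*)⁻¹L + ((φ-1)/(q-1))(A*)⁻¹` and `A*` on `L_N(q)`:
`A*³A - (β+1)A*²AA* + (β+1)A*AA*² - AA*³ = 0`, where `β = q + q⁻¹`. -/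
theorem stmt_10 (hN : 1 ≤ N) (φ : ℝ) (hφ : 0 < φ) :
    let q : ℂ := (Fintype.card F : ℂ)
    let A : Matrix (X F N) (X F N) ℂ :=
      R F N + (φ : ℂ) • ((Astar F N)⁻¹ * L F N) +
        (((φ : ℂ) - 1) / (q - 1)) • (Astar F N)⁻¹
    let As := Astar F N
    let β : ℂ := q + q⁻¹
    As ^ 3 * A - (β + 1) • (As ^ 2 * A * As) + (β + 1) • (As * A * As ^ 2) - A * As ^ 3 = 0 := by
  intro q A As β
  have hq : q ≠ 0 := by
    simp only [q]
    exact_mod_cast Fintype.card_ne_zero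
  set d : X F N → ℂ := fun y => q ^ (-(dimS F N y : ℤ)) with hd_def
  have hd : ∀ y, d y ≠ 0 := fun y => zpow_ne_zero _ hq
  have hAs : As = Matrix.diagonal d := rfl
  have hAsinv : As⁻¹ = Matrix.diagonal (fun y => (d y)⁻¹) := by
    rw [hAs]
    apply Matrix.inv_eq_right_inv
    rw [Matrix.diagonal_mul_diagonal,
      show (fun i => d i * (d i)⁻¹) = fun _ : X F N => (1 : ℂ) from
        funext fun i => mul_inv_cancel₀ (hd i),
      Matrix.diagonal_one]
  have hβ : β = q + q⁻¹ := rfl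
  have main : ∀ (t u : ℂ), (t = u ∨ u = q * t ∨ t = q * u) → ∀ a : ℂ,
      t ^ 3 * a - (β + 1) * (t ^ 2 * a * u) + (β + 1) * (t * a * u ^ 2) - a * u ^ 3 = 0 := by
    intro t u h a
    rw [hβ]
    rcases h with h | h | h <;> subst h <;> field_simp <;> ring
  -- relation from covering
  have hcov : ∀ y z : X F N, Covers F N y z → d z = q * d y := by
    intro y z h
    have h2 : (-(dimS F N y : ℤ)) = (-(dimS F N z : ℤ)) - 1 := by
      have := h.2; omega
    simp only [hd_def]
    rw [h2, zpow_sub₀ hq, zpow_one]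
    field_simp
  ext y z
  have hentries : ∀ M1 M2 M3 M4 : Matrix (X F N) (X F N) ℂ,
      (M1 - M2 + M3 - M4) y z = M1 y z - M2 y z + M3 y z - M4 y z := by
    intro M1 M2 M3 M4; simp
  rw [hentries]
  have e1 : (As ^ 3 * A) y z = d y ^ 3 * A y z := by
    rw [hAs, Matrix.diagonal_pow, Matrix.diagonal_mul]; rfl
  have e2 : ((β + 1) • (As ^ 2 * A * As)) y z = (β + 1) * (d y ^ 2 * A y z * d z) := by
    rw [Matrix.smul_apply, hAs, smul_eq_mul, Matrix.diagonal_pow, Matrix.mul_diagonal,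
      Matrix.diagonal_mul, Pi.pow_apply]
  have e3 : ((β + 1) • (As * A * As ^ 2)) y z = (β + 1) * (d y * A y z * d z ^ 2) := by
    rw [Matrix.smul_apply, hAs, smul_eq_mul, Matrix.diagonal_pow, Matrix.mul_diagonal,
      Matrix.diagonal_mul, Pi.pow_apply]
  have e4 : (A * As ^ 3) y z = A y z * d z ^ 3 := by
    rw [hAs, Matrix.diagonal_pow, Matrix.mul_diagonal]; rfl
  rw [e1, e2, e3, e4, Matrix.zero_apply]
  by_cases h1 : Covers F N y z
  · exact main _ _ (Or.inr (Or.inl (hcov _ _ h1))) _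
  by_cases h2 : Covers F N z y
  · exact main _ _ (Or.inr (Or.inr (hcov _ _ h2))) _
  by_cases h3 : y = z
  · exact main _ _ (Or.inl (by rw [h3])) _
  · have hA : A y z = 0 := by
      show (R F N + (φ : ℂ) • ((Astar F N)⁻¹ * L F N) +
        (((φ : ℂ) - 1) / (q - 1)) • (Astar F N)⁻¹) y z = 0
      have hAs' : (Astar F N)⁻¹ = Matrix.diagonal (fun y => (d y)⁻¹) := hAsinv
      rw [Matrix.add_apply, Matrix.add_apply, Matrix.smul_apply, Matrix.smul_apply,
        hAs', Matrix.diagonal_mul]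
      simp [R, L, Matrix.transpose_apply, Matrix.diagonal_apply_ne _ h3, h1, h2]
    rw [hA]
    ring


end
end

section
/- The matrix A = R + φ(A*)^{-1}L + ((φ-1)/(q-1))(A*)^{-1} on the projective geometry L_N(q) is diagonalizable over ℂ. -/
open Matrix

noncomputable section
open scoped Classical

variable (F : Type) [Field F] [Fintype F] (N : ℕ)

/-- Auxiliary sequence: `gseq a b n = a^n * b^(n(n-1)/2)`, defined recursively. -/
private def gseq (a b : ℝ) : ℕ → ℝ
  | 0 => 1
  | n + 1 => gseq a b n * (a * b ^ n)

private lemma gseq_pos {a b : ℝ} (ha : 0 < a) (hb : 0 < b) : ∀ n, 0 < gseq a b n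
  | 0 => one_pos
  | n + 1 => mul_pos (gseq_pos ha hb n) (mul_pos ha (pow_pos hb n))

/-- The matrix `A = R + φ(A*)⁻¹L + ((φ-1)/(q-1))(A*)⁻¹` is diagonalizable over `ℂ`. -/
theorem stmt_12 (hN : 1 ≤ N) (φ : ℝ) (hφ : 0 < φ) :
    let q : ℂ := (Fintype.card F : ℂ)
    let A : Matrix (X F N) (X F N) ℂ :=
      R F N + (φ : ℂ) • ((Astar F N)⁻¹ * L F N) +
        (((φ : ℂ) - 1) / (q - 1)) • (Astar F N)⁻¹
    ∃ (P : Matrix (X F N) (X F N) ℂ) (d : X F N → ℂ),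
      IsUnit P.det ∧ P⁻¹ * A * P = Matrix.diagonal d := by
  intro q A
  classical
  have hcard : 0 < Fintype.card F := Fintype.card_pos
  have hqR : (0:ℝ) < (Fintype.card F : ℝ) := by exact_mod_cast hcard
  have hqC : (Fintype.card F : ℂ) ≠ 0 := by exact_mod_cast hcard.ne'
  set sq : ℝ := Real.sqrt (Fintype.card F) with hsq
  set sφ : ℝ := Real.sqrt φ with hsφ
  have hsqpos : 0 < sq := Real.sqrt_pos.mpr hqR
  have hsφpos : 0 < sφ := Real.sqrt_pos.mpr hφ
  have hsq2 : sq * sq = (Fintype.card F : ℝ) := Real.mul_self_sqrt hqR.le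
  have hsφ2 : sφ * sφ = φ := Real.mul_self_sqrt hφ.le
  have hgpos : ∀ n, 0 < gseq sφ sq n := gseq_pos hsφpos hsqpos
  -- the conjugating diagonal matrix and its inverse
  set D : Matrix (X F N) (X F N) ℂ :=
    Matrix.diagonal (fun y => ((gseq sφ sq (dimS F N y) : ℝ) : ℂ)) with hD
  set Dinv : Matrix (X F N) (X F N) ℂ :=
    Matrix.diagonal (fun y => (((gseq sφ sq (dimS F N y))⁻¹ : ℝ) : ℂ)) with hDinv
  have hDDinv : D * Dinv = 1 := by
    rw [hD, hDinv, Matrix.diagonal_mul_diagonal]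
    have : (fun y : X F N => ((gseq sφ sq (dimS F N y) : ℝ) : ℂ) *
        (((gseq sφ sq (dimS F N y))⁻¹ : ℝ) : ℂ)) = fun _ => (1:ℂ) := by
      funext y
      rw [← Complex.ofReal_mul, mul_inv_cancel₀ (hgpos _).ne', Complex.ofReal_one]
    rw [this, Matrix.diagonal_one]
  have hDinvD : Dinv * D = 1 := by
    rw [hD, hDinv, Matrix.diagonal_mul_diagonal]
    have : (fun y : X F N => (((gseq sφ sq (dimS F N y))⁻¹ : ℝ) : ℂ) *
        ((gseq sφ sq (dimS F N y) : ℝ) : ℂ)) = fun _ => (1:ℂ) := by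
      funext y
      rw [← Complex.ofReal_mul, inv_mul_cancel₀ (hgpos _).ne', Complex.ofReal_one]
    rw [this, Matrix.diagonal_one]
  -- the inverse of A*
  have hAstarInv : (Astar F N)⁻¹ =
      Matrix.diagonal (fun y => (Fintype.card F : ℂ) ^ (dimS F N y)) := by
    apply Matrix.inv_eq_right_inv
    rw [Astar, Matrix.diagonal_mul_diagonal]
    have : (fun y : X F N => (Fintype.card F : ℂ) ^ (-(dimS F N y : ℤ)) *
        (Fintype.card F : ℂ) ^ (dimS F N y)) = fun _ => (1:ℂ) := by
      funext y
      rw [_root_.zpow_neg, zpow_natCast, inv_mul_cancel₀ (pow_ne_zero _ hqC)]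
    rw [this, Matrix.diagonal_one]
  -- entries of A
  have hA_apply : ∀ y z, A y z = (if Covers F N y z then (1:ℂ) else 0)
      + (φ:ℂ) * ((Fintype.card F : ℂ) ^ (dimS F N y) * (if Covers F N z y then (1:ℂ) else 0))
      + (((φ:ℂ) - 1) / ((Fintype.card F : ℂ) - 1)) *
          (if y = z then (Fintype.card F : ℂ) ^ (dimS F N y) else 0) := by
    intro y z
    show (R F N + (φ:ℂ) • ((Astar F N)⁻¹ * L F N) +
        (((φ:ℂ) - 1) / ((Fintype.card F : ℂ) - 1)) • (Astar F N)⁻¹) y z = _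
    rw [hAstarInv]
    simp [Matrix.add_apply, Matrix.smul_apply, Matrix.diagonal_mul, Matrix.diagonal_apply,
      L, R, Matrix.transpose_apply, smul_eq_mul, mul_ite, mul_zero]
  -- the conjugated matrix is Hermitian
  have hS : (D * A * Dinv).IsHermitian := by
    show (D * A * Dinv)ᴴ = D * A * Dinv
    ext y z
    rw [Matrix.conjTranspose_apply]
    rw [hD, hDinv]
    rw [Matrix.mul_diagonal, Matrix.mul_diagonal, Matrix.diagonal_mul, Matrix.diagonal_mul,
      hA_apply, hA_apply]
    by_cases hyz : y = z
    · subst hyz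
      have hCyy : ¬ Covers F N y y := by
        rintro ⟨-, h2⟩; omega
      simp only [hCyy, if_neg, if_pos rfl, ite_false, ite_true, eq_self_iff_true, if_true,
        mul_zero, mul_one, zero_add, add_zero]
      simp only [← Complex.ofReal_natCast, ← Complex.ofReal_pow, ← Complex.ofReal_one,
        ← Complex.ofReal_sub, ← Complex.ofReal_div, ← Complex.ofReal_mul, ← Complex.ofReal_inv,
        ← Complex.ofReal_zero, ← Complex.ofReal_add]
      rw [Complex.star_def, Complex.conj_ofReal]
    · by_cases hC : Covers F N y z
      · have hC' : ¬ Covers F N z y := by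
          rintro ⟨-, h2⟩; have := hC.2; omega
        have hzy : ¬ z = y := fun h => hyz h.symm
        simp only [hC, hC', hyz, hzy, if_pos, if_neg, ite_true, ite_false, mul_zero, mul_one,
          zero_add, add_zero]
        simp only [← Complex.ofReal_natCast, ← Complex.ofReal_pow, ← Complex.ofReal_one,
          ← Complex.ofReal_mul, ← Complex.ofReal_inv]
        rw [Complex.star_def, Complex.conj_ofReal, Complex.ofReal_inj]
        -- real identity
        obtain ⟨-, h2⟩ := hC
        rw [h2]
        set k := dimS F N z
        have hgk := (hgpos k).ne'
        have hgk1 := (hgpos (k+1)).ne'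
        have hrec : gseq sφ sq (k+1) = gseq sφ sq k * (sφ * sq ^ k) := rfl
        rw [hrec, ← hsφ2, ← hsq2]
        field_simp
        ring
      · by_cases hC' : Covers F N z y
        · have hzy : ¬ z = y := fun h => hyz h.symm
          simp only [hC, hC', hyz, hzy, if_pos, if_neg, ite_true, ite_false, mul_zero, mul_one,
            zero_add, add_zero]
          simp only [← Complex.ofReal_natCast, ← Complex.ofReal_pow, ← Complex.ofReal_one,
            ← Complex.ofReal_mul, ← Complex.ofReal_inv]
          rw [Complex.star_def, Complex.conj_ofReal, Complex.ofReal_inj]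
          obtain ⟨-, h2⟩ := hC'
          rw [h2]
          set k := dimS F N y
          have hgk := (hgpos k).ne'
          have hgk1 := (hgpos (k+1)).ne'
          have hrec : gseq sφ sq (k+1) = gseq sφ sq k * (sφ * sq ^ k) := rfl
          rw [hrec, ← hsφ2, ← hsq2]
          field_simp
          ring
        · have hzy : ¬ z = y := fun h => hyz h.symm
          simp [hC, hC', hyz, hzy]
  -- spectral theorem
  set U : Matrix (X F N) (X F N) ℂ := (hS.eigenvectorUnitary : Matrix (X F N) (X F N) ℂ)
    with hUdef
  have hU1 : U * star U = 1 := Matrix.mem_unitaryGroup_iff.mp hS.eigenvectorUnitary.2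
  have hU2 : star U * U = 1 := Matrix.mem_unitaryGroup_iff'.mp hS.eigenvectorUnitary.2
  have hspec : D * A * Dinv =
      U * Matrix.diagonal (RCLike.ofReal ∘ hS.eigenvalues) * star U := hS.spectral_theorem
  set P : Matrix (X F N) (X F N) ℂ := Dinv * U with hP
  set Pinv : Matrix (X F N) (X F N) ℂ := star U * D with hPinv
  have hPP : P * Pinv = 1 := by
    rw [hP, hPinv]
    calc Dinv * U * (star U * D) = Dinv * (U * star U) * D := by
          simp only [Matrix.mul_assoc]
      _ = 1 := by rw [hU1, Matrix.mul_one, hDinvD]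
  have hPP' : Pinv * P = 1 := by
    rw [hP, hPinv]
    calc star U * D * (Dinv * U) = star U * (D * Dinv) * U := by
          simp only [Matrix.mul_assoc]
      _ = 1 := by rw [hDDinv, Matrix.mul_one, hU2]
  have hPinv_eq : P⁻¹ = Pinv := Matrix.inv_eq_right_inv hPP
  refine ⟨P, RCLike.ofReal ∘ hS.eigenvalues, Matrix.isUnit_det_of_right_inverse hPP, ?_⟩
  rw [hPinv_eq, hPinv, hP]
  calc star U * D * A * (Dinv * U)
      = star U * (D * A * Dinv) * U := by simp only [Matrix.mul_assoc]
    _ = star U * (U * Matrix.diagonal (RCLike.ofReal ∘ hS.eigenvalues) * star U) * U :=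
        congrArg (fun M => star U * M * U) hspec
    _ = (star U * U) * Matrix.diagonal (RCLike.ofReal ∘ hS.eigenvalues) * (star U * U) := by
        simp only [Matrix.mul_assoc]
    _ = Matrix.diagonal (RCLike.ofReal ∘ hS.eigenvalues) := by
        rw [hU2, Matrix.one_mul, Matrix.mul_one]

end
end

section
/- Let B be the (d+1)×(d+1) tridiagonal matrix with subdiagonal entries c_i = q^r (q^i-1)/(q-1) (1 ≤ i ≤ d), diagonal entries a_i = ((φ-1)/(q-1)) q^{i+r} (0 ≤ i ≤ d), and superdiagonal entries b_i = φ (q^{N-r} - q^{i+r})/(q-1) (0 ≤ i ≤ d-1), where d = N - 2r. Then B is multiplicity-free (diagonalizable with distinct eigenvalues), with eigenvalues θ_{i+r} = (φ q^{N-i-r} - q^{i+r})/(q-1) for 0 ≤ i ≤ d. -/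
open Finset

/-- Gaussian binomial coefficient with parameter `qc`. -/
def qG (qc : ℂ) : ℕ → ℕ → ℂ
  | _, 0 => 1
  | 0, _+1 => 0
  | m+1, k+1 => qG qc m k + qc ^ (k+1) * qG qc m (k+1)

lemma qG_zero_right (qc : ℂ) (m : ℕ) : qG qc m 0 = 1 := by cases m <;> rfl

lemma qG_succ (qc : ℂ) (m k : ℕ) :
    qG qc (m+1) (k+1) = qG qc m k + qc ^ (k+1) * qG qc m (k+1) := rfl

lemma qG_eq_zero (qc : ℂ) {m k : ℕ} (h : m < k) : qG qc m k = 0 := by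
  induction m generalizing k with
  | zero => obtain ⟨k, rfl⟩ := Nat.exists_eq_add_of_lt h; rfl
  | succ m ih =>
    obtain ⟨k, rfl⟩ : ∃ k', k = k' + 1 := ⟨k - 1, by omega⟩
    rw [qG_succ, ih (by omega), ih (by omega)]
    ring

lemma qG_one (qc : ℂ) (e : ℕ) : (qc - 1) * qG qc e 1 = qc ^ e - 1 := by
  induction e with
  | zero => simp [qG_eq_zero qc (by omega : 0 < 1)]
  | succ e ih =>
    rw [qG_succ, qG_zero_right, pow_succ]
    linear_combination qc * ih

lemma qG_fact4 (qc : ℂ) (k : ℕ) : ∀ e : ℕ,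
    (qc ^ (k+1) - 1) * qG qc (k+e) (k+1) = (qc ^ e - 1) * qG qc (k+e) k := by
  induction k with
  | zero =>
    intro e
    simpa [qG_zero_right] using qG_one qc e
  | succ k ihk =>
    intro e
    induction e with
    | zero =>
      rw [qG_eq_zero qc (by omega : k + 1 + 0 < k + 1 + 1)]
      simp
    | succ e ihe =>
      rw [show k+1+(e+1) = (k+e+1)+1 from by omega, qG_succ qc (k+e+1) (k+1),
        qG_succ qc (k+e+1) k]
      rw [show k+1+e = k+e+1 from by omega] at ihe
      have h3 := ihk (e+1)
      rw [show k+(e+1) = k+e+1 from by omega] at h3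
      linear_combination qc^(k+2) * ihe + h3

lemma qG_fact1 (qc : ℂ) (k e : ℕ) :
    qG qc (k+e+1) (k+1) = qG qc (k+e) k + qc ^ (k+1) * qG qc (k+e) (k+1) := qG_succ qc (k+e) k

lemma qG_fact2 (qc : ℂ) (k e : ℕ) :
    qG qc (k+e+1) (k+1) = qG qc (k+e) (k+1) + qc ^ e * qG qc (k+e) k := by
  have h1 := qG_fact1 qc k e
  have h4 := qG_fact4 qc k e
  linear_combination h1 + h4

lemma qG_fact3 (qc : ℂ) (k e : ℕ) :
    (qc ^ (k+1) - 1) * qG qc (k+e+1) (k+1) = (qc ^ (k+e+1) - 1) * qG qc (k+e) k := by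
  have h1 := qG_fact1 qc k e
  have h4 := qG_fact4 qc k e
  linear_combination (qc^(k+1) - 1) * h1 + qc^(k+1) * h4

/-- Upper triangular change-of-basis entries. -/
def Tmat (qc fc : ℂ) (d : ℕ) (a b : ℕ) : ℂ :=
  if a ≤ b ∧ b ≤ d then (-fc) ^ (b - a) * qG qc (d - a) (b - a) else 0

lemma EcoreS (qc fc x : ℂ) (k e r : ℕ) :
    qc ^ r * (x - 1) / (qc - 1) * ((-fc) ^ (k+2) * qG qc (k+e+2) (k+2))
    + ((fc - 1) / (qc - 1)) * (x * qc ^ r) * ((-fc) ^ (k+1) * qG qc (k+e+1) (k+1))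
    + fc * (x * qc ^ (k+1+e) * qc ^ r - x * qc ^ r) / (qc - 1) * ((-fc) ^ k * qG qc (k+e) k)
    = ((fc * qc ^ e * qc ^ r - x * qc ^ (k+1) * qc ^ r) / (qc - 1))
        * ((-fc) ^ (k+1) * qG qc (k+e+1) (k+1))
      + ((-fc) ^ (k+2) * qG qc (k+e+1) (k+2)) * (qc ^ r * (x * qc ^ (k+2) - 1) / (qc - 1)) := by
  have h1 : qG qc (k+e+2) (k+2) = qG qc (k+e+1) (k+1) + qc ^ (k+2) * qG qc (k+e+1) (k+2) := by
    have := qG_succ qc (k+e+1) (k+1)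
    rw [show k+e+1+1 = k+e+2 from by omega, show k+1+1 = k+2 from by omega] at this
    exact this
  have h2 : qG qc (k+e+2) (k+2) = qG qc (k+e+1) (k+2) + qc ^ e * qG qc (k+e+1) (k+1) := by
    have := qG_fact2 qc (k+1) e
    rw [show k+1+e = k+e+1 from by omega, show k+e+1+1 = k+e+2 from by omega,
      show k+1+1 = k+2 from by omega] at this
    exact this
  have h3 : (qc ^ (k+1) - 1) * qG qc (k+e+1) (k+1) = (qc ^ (k+e+1) - 1) * qG qc (k+e) k :=
    qG_fact3 qc k e
  linear_combination (qc^r * (-fc)^k * fc^2 * x / (qc-1)) * h1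
    + (-(qc^r * (-fc)^k * fc^2) / (qc-1)) * h2
    + (-(qc^r * (-fc)^k * fc * x) / (qc-1)) * h3

lemma Ecore0 (qc fc x : ℂ) (e r : ℕ) :
    qc ^ r * (x - 1) / (qc - 1) * ((-fc) ^ 1 * qG qc (e+1) 1)
    + ((fc - 1) / (qc - 1)) * (x * qc ^ r) * 1
    = ((fc * qc ^ e * qc ^ r - x * qc ^ r) / (qc - 1)) * 1
      + ((-fc) ^ 1 * qG qc e 1) * (qc ^ r * (x * qc ^ 1 - 1) / (qc - 1)) := by
  have h1 : qG qc (e+1) 1 = 1 + qc * qG qc e 1 := by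
    have := qG_succ qc e 0
    rw [qG_zero_right] at this
    rw [show (0:ℕ)+1 = 1 from rfl] at this
    rw [pow_one] at this
    exact this
  have h2 : qG qc (e+1) 1 = qG qc e 1 + qc ^ e * 1 := by
    have := qG_fact2 qc 0 e
    rw [show (0:ℕ)+e+1 = e+1 from by omega, show (0:ℕ)+e = e from by omega,
      show (0:ℕ)+1 = 1 from rfl, qG_zero_right] at this
    exact this
  linear_combination (-(fc * x * qc^r) / (qc-1)) * h1 + (fc * qc^r / (qc-1)) * h2

lemma Tmat_of (qc fc : ℂ) {d a b : ℕ} (h1 : a ≤ b) (h2 : b ≤ d) :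
    Tmat qc fc d a b = (-fc) ^ (b - a) * qG qc (d - a) (b - a) := if_pos ⟨h1, h2⟩

lemma Tmat_zero (qc fc : ℂ) {d a b : ℕ} (h : ¬(a ≤ b ∧ b ≤ d)) :
    Tmat qc fc d a b = 0 := if_neg h

lemma E1 (qc fc : ℂ) (d r : ℕ) (i j : ℕ) (hi : i ≤ d) (hj : j ≤ d) :
    qc ^ r * (qc ^ i - 1) / (qc - 1) * Tmat qc fc d (i-1) j
    + ((fc - 1) / (qc - 1)) * qc ^ (i + r) * Tmat qc fc d i j
    + fc * (qc ^ (d + r) - qc ^ (i + r)) / (qc - 1) * Tmat qc fc d (i+1) j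
    = Tmat qc fc d i j * ((fc * qc ^ ((d - j) + r) - qc ^ (j + r)) / (qc - 1))
    + Tmat qc fc d i (j+1) * (qc ^ r * (qc ^ (j+1) - 1) / (qc - 1)) := by
  rcases le_or_gt i j with hij | hij
  · obtain ⟨k, rfl⟩ : ∃ k, j = i + k := ⟨j - i, by omega⟩
    obtain ⟨e, rfl⟩ : ∃ e, d = i + k + e := ⟨d - (i + k), by omega⟩
    rw [show i + k + e - (i + k) = e from by omega]
    rcases k with _ | k'
    · -- k = 0 : j = i
      have hT3 : Tmat qc fc (i+0+e) (i+1) (i+0) = 0 := Tmat_zero _ _ (by omega)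
      have hTij : Tmat qc fc (i+0+e) i (i+0) = 1 := by
        rw [Tmat_of _ _ (by omega) (by omega), show i+0-i = 0 from by omega]
        simp [qG_zero_right]
      have hTij1 : Tmat qc fc (i+0+e) i (i+0+1) = (-fc) ^ 1 * qG qc e 1 := by
        rcases e with _ | e'
        · rw [Tmat_zero _ _ (by omega), qG_eq_zero qc (by omega : 0 < 1)]; ring
        · rw [Tmat_of _ _ (by omega) (by omega), show i+0+1-i = 1 from by omega,
            show i+0+(e'+1)-i = e'+1 from by omega]
      rcases i with _ | i''
      · rw [show (0:ℕ)-1 = 0 from rfl] at *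
        rw [hT3, hTij, hTij1]
        linear_combination Ecore0 qc fc (qc ^ 0) e r
      · have hT1 : Tmat qc fc (i''+1+0+e) (i''+1-1) (i''+1+0) = (-fc) ^ 1 * qG qc (e+1) 1 := by
          rw [show i''+1-1 = i'' from by omega, Tmat_of _ _ (by omega) (by omega),
            show i''+1+0-i'' = 1 from by omega, show i''+1+0+e-i'' = e+1 from by omega]
        rw [hT1, hT3, hTij, hTij1]
        linear_combination Ecore0 qc fc (qc ^ (i''+1)) e r
    · -- k = k'+1
      have hT3 : Tmat qc fc (i+(k'+1)+e) (i+1) (i+(k'+1)) = (-fc) ^ k' * qG qc (k'+e) k' := by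
        rw [Tmat_of _ _ (by omega) (by omega), show i+(k'+1)-(i+1) = k' from by omega,
          show i+(k'+1)+e-(i+1) = k'+e from by omega]
      have hTij : Tmat qc fc (i+(k'+1)+e) i (i+(k'+1)) = (-fc) ^ (k'+1) * qG qc (k'+e+1) (k'+1) := by
        rw [Tmat_of _ _ (by omega) (by omega), show i+(k'+1)-i = k'+1 from by omega,
          show i+(k'+1)+e-i = k'+e+1 from by omega]
      have hTij1 : Tmat qc fc (i+(k'+1)+e) i (i+(k'+1)+1) = (-fc) ^ (k'+2) * qG qc (k'+e+1) (k'+2) := by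
        rcases e with _ | e'
        · rw [Tmat_zero _ _ (by omega), qG_eq_zero qc (by omega : k'+0+1 < k'+2)]; ring
        · rw [Tmat_of _ _ (by omega) (by omega), show i+(k'+1)+1-i = k'+2 from by omega,
            show i+(k'+1)+(e'+1)-i = k'+(e'+1)+1 from by omega]
      rcases i with _ | i''
      · rw [show (0:ℕ)-1 = 0 from rfl] at *
        rw [hT3, hTij1]
        rw [hTij] -- also rewrites the (0-1) occurrence since both are `Tmat _ 0 (0+(k'+1))`
        linear_combination EcoreS qc fc (qc ^ 0) k' e r
      · have hT1 : Tmat qc fc (i''+1+(k'+1)+e) (i''+1-1) (i''+1+(k'+1))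
            = (-fc) ^ (k'+2) * qG qc (k'+e+2) (k'+2) := by
          rw [show i''+1-1 = i'' from by omega, Tmat_of _ _ (by omega) (by omega),
            show i''+1+(k'+1)-i'' = k'+2 from by omega,
            show i''+1+(k'+1)+e-i'' = k'+e+2 from by omega]
        rw [hT1, hT3, hTij, hTij1]
        linear_combination EcoreS qc fc (qc ^ (i''+1)) k' e r
  · rcases Nat.lt_or_ge (j+1) i with hij2 | hij2
    · -- i > j+1 : everything vanishes
      rw [Tmat_zero _ _ (by omega), Tmat_zero _ _ (by omega), Tmat_zero _ _ (by omega),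
        Tmat_zero _ _ (by omega)]
      ring
    · -- i = j+1
      have hie : i = j + 1 := by omega
      subst hie
      have hT1 : Tmat qc fc d (j+1-1) j = 1 := by
        rw [show j+1-1 = j from by omega, Tmat_of _ _ (le_refl j) (by omega)]
        simp [qG_zero_right]
      have hT4 : Tmat qc fc d (j+1) (j+1) = 1 := by
        rw [Tmat_of _ _ (le_refl _) (by omega)]
        simp [qG_zero_right]
      rw [hT1, hT4, Tmat_zero _ _ (by omega), Tmat_zero _ _ (by omega)]
      ring

/-- Lower triangular eigenvector matrix for a lower bidiagonal matrix. -/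
noncomputable def Smat (c t : ℕ → ℂ) (i : ℕ) : ℕ → ℂ :=
  Nat.rec (motive := fun _ => ℕ → ℂ) (fun j => if 0 = j then 1 else 0)
    (fun i' prev j => if i'+1 = j then 1 else if j ≤ i' then
      (-(c (i'+1)) / (t (i'+1) - t j)) * prev j else 0) i

lemma Smat_zero (c t : ℕ → ℂ) (j : ℕ) : Smat c t 0 j = if 0 = j then 1 else 0 := rfl

lemma Smat_succ (c t : ℕ → ℂ) (i j : ℕ) :
    Smat c t (i+1) j = if i+1 = j then 1 else if j ≤ i then
      (-(c (i+1)) / (t (i+1) - t j)) * Smat c t i j else 0 := rfl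

lemma Smat_diag (c t : ℕ → ℂ) (i : ℕ) : Smat c t i i = 1 := by
  cases i with
  | zero => rw [Smat_zero, if_pos rfl]
  | succ i => rw [Smat_succ, if_pos rfl]

lemma Smat_upper (c t : ℕ → ℂ) {i j : ℕ} (h : i < j) : Smat c t i j = 0 := by
  cases i with
  | zero => rw [Smat_zero, if_neg (by omega)]
  | succ i => rw [Smat_succ, if_neg (by omega), if_neg (by omega)]

lemma E2 (c t : ℕ → ℂ) (i j : ℕ) (hc : c 0 = 0)
    (hne : i ≠ j → t i ≠ t j) :
    c i * Smat c t (i-1) j + t i * Smat c t i j = Smat c t i j * t j := by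
  cases i with
  | zero =>
    rcases Nat.eq_zero_or_pos j with rfl | hj
    · simp [Smat_diag, hc]
    · rw [Smat_upper c t (by omega : 0-1 < j), hc]
      ring
  | succ i' =>
    rw [show i'+1-1 = i' from by omega]
    rcases Nat.lt_trichotomy (i'+1) j with h | h | h
    · rw [Smat_upper c t h, Smat_upper c t (by omega : i' < j)]
      ring
    · subst h
      rw [Smat_diag, Smat_upper c t (by omega : i' < i'+1)]
      ring
    · have hj : j ≤ i' := by omega
      have hd : t (i'+1) - t j ≠ 0 := sub_ne_zero.mpr (hne (by omega))
      rw [show Smat c t (i'+1) j = (-(c (i'+1)) / (t (i'+1) - t j)) * Smat c t i' j from by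
        rw [Smat_succ, if_neg (by omega), if_pos hj]]
      field_simp
      ring

lemma ifsplit3 (iv kv : ℕ) (c a b m : ℂ) :
    (if iv = kv+1 then c else if iv = kv then a else if kv = iv+1 then b else 0) * m
    = (if iv = kv+1 then c * m else 0) + (if iv = kv then a * m else 0)
      + (if kv = iv+1 then b * m else 0) := by
  split_ifs <;> first | (exfalso; omega) | ring

lemma ifsplit2 (iv kv : ℕ) (c a m : ℂ) :
    (if iv = kv+1 then c else if iv = kv then a else 0) * m
    = (if iv = kv+1 then c * m else 0) + (if iv = kv then a * m else 0) := by
  split_ifs <;> first | (exfalso; omega) | ring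

lemma ifsplit2R (kv jv : ℕ) (c a m : ℂ) :
    m * (if kv = jv+1 then c else if kv = jv then a else 0)
    = (if kv = jv+1 then m * c else 0) + (if kv = jv then m * a else 0) := by
  split_ifs <;> first | (exfalso; omega) | ring

lemma trisum (d : ℕ) (i : Fin (d+1)) (c a b M : ℕ → ℂ)
    (hc : c 0 = 0) (hM : M (d+1) = 0) :
    ∑ k : Fin (d+1), (if (i:ℕ) = (k:ℕ)+1 then c (i:ℕ) else if (i:ℕ) = (k:ℕ) then a (i:ℕ)
      else if (k:ℕ) = (i:ℕ)+1 then b (i:ℕ) else 0) * M (k:ℕ)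
    = c (i:ℕ) * M ((i:ℕ)-1) + a (i:ℕ) * M (i:ℕ) + b (i:ℕ) * M ((i:ℕ)+1) := by
  have hsplit : ∀ k : Fin (d+1),
      (if (i:ℕ) = (k:ℕ)+1 then c (i:ℕ) else if (i:ℕ) = (k:ℕ) then a (i:ℕ)
        else if (k:ℕ) = (i:ℕ)+1 then b (i:ℕ) else 0) * M (k:ℕ)
      = (if (i:ℕ) = (k:ℕ)+1 then c (i:ℕ) * M (k:ℕ) else 0)
        + (if (i:ℕ) = (k:ℕ) then a (i:ℕ) * M (k:ℕ) else 0)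
        + (if (k:ℕ) = (i:ℕ)+1 then b (i:ℕ) * M (k:ℕ) else 0) :=
    fun k => ifsplit3 (i:ℕ) (k:ℕ) _ _ _ _
  rw [Finset.sum_congr rfl (fun k _ => hsplit k), Finset.sum_add_distrib,
    Finset.sum_add_distrib]
  have hid : (i:ℕ) < d + 1 := i.isLt
  have s1 : (∑ k : Fin (d+1), if (i:ℕ) = (k:ℕ)+1 then c (i:ℕ) * M (k:ℕ) else 0)
      = c (i:ℕ) * M ((i:ℕ)-1) := by
    rw [Fin.sum_univ_eq_sum_range (fun m => if (i:ℕ) = m+1 then c (i:ℕ) * M m else 0)]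
    rcases hi : (i:ℕ) with _ | t
    · rw [Finset.sum_eq_zero (fun m _ => if_neg (by omega))]
      rw [hc]; ring
    · rw [Finset.sum_eq_single_of_mem t (Finset.mem_range.mpr (by omega))
        (fun m _ hm => if_neg (by omega)), if_pos rfl, show t+1-1 = t from by omega]
  have s2 : (∑ k : Fin (d+1), if (i:ℕ) = (k:ℕ) then a (i:ℕ) * M (k:ℕ) else 0)
      = a (i:ℕ) * M (i:ℕ) := by
    rw [Fin.sum_univ_eq_sum_range (fun m => if (i:ℕ) = m then a (i:ℕ) * M m else 0)]
    rw [Finset.sum_eq_single_of_mem (i:ℕ) (Finset.mem_range.mpr (by omega))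
      (fun m _ hm => if_neg (by omega)), if_pos rfl]
  have s3 : (∑ k : Fin (d+1), if (k:ℕ) = (i:ℕ)+1 then b (i:ℕ) * M (k:ℕ) else 0)
      = b (i:ℕ) * M ((i:ℕ)+1) := by
    rw [Fin.sum_univ_eq_sum_range (fun m => if m = (i:ℕ)+1 then b (i:ℕ) * M m else 0)]
    rcases Nat.lt_or_ge ((i:ℕ)+1) (d+1) with hlt | hge
    · rw [Finset.sum_eq_single_of_mem ((i:ℕ)+1) (Finset.mem_range.mpr hlt)
        (fun m _ hm => if_neg hm), if_pos rfl]
    · rw [Finset.sum_eq_zero (fun m hm => if_neg (by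
        have := Finset.mem_range.mp hm; omega))]
      rw [show (i:ℕ)+1 = d+1 from by omega, hM]
      ring
  rw [s1, s2, s3]

lemma bisumL (d : ℕ) (i : Fin (d+1)) (c a M : ℕ → ℂ) (hc : c 0 = 0) :
    ∑ k : Fin (d+1), (if (i:ℕ) = (k:ℕ)+1 then c (i:ℕ) else if (i:ℕ) = (k:ℕ) then a (i:ℕ)
      else 0) * M (k:ℕ)
    = c (i:ℕ) * M ((i:ℕ)-1) + a (i:ℕ) * M (i:ℕ) := by
  have hsplit : ∀ k : Fin (d+1),
      (if (i:ℕ) = (k:ℕ)+1 then c (i:ℕ) else if (i:ℕ) = (k:ℕ) then a (i:ℕ) else 0) * M (k:ℕ)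
      = (if (i:ℕ) = (k:ℕ)+1 then c (i:ℕ) * M (k:ℕ) else 0)
        + (if (i:ℕ) = (k:ℕ) then a (i:ℕ) * M (k:ℕ) else 0) :=
    fun k => ifsplit2 (i:ℕ) (k:ℕ) _ _ _
  rw [Finset.sum_congr rfl (fun k _ => hsplit k), Finset.sum_add_distrib]
  have hid : (i:ℕ) < d + 1 := i.isLt
  have s1 : (∑ k : Fin (d+1), if (i:ℕ) = (k:ℕ)+1 then c (i:ℕ) * M (k:ℕ) else 0)
      = c (i:ℕ) * M ((i:ℕ)-1) := by
    rw [Fin.sum_univ_eq_sum_range (fun m => if (i:ℕ) = m+1 then c (i:ℕ) * M m else 0)]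
    rcases hi : (i:ℕ) with _ | t
    · rw [Finset.sum_eq_zero (fun m _ => if_neg (by omega))]
      rw [hc]; ring
    · rw [Finset.sum_eq_single_of_mem t (Finset.mem_range.mpr (by omega))
        (fun m _ hm => if_neg (by omega)), if_pos rfl, show t+1-1 = t from by omega]
  have s2 : (∑ k : Fin (d+1), if (i:ℕ) = (k:ℕ) then a (i:ℕ) * M (k:ℕ) else 0)
      = a (i:ℕ) * M (i:ℕ) := by
    rw [Fin.sum_univ_eq_sum_range (fun m => if (i:ℕ) = m then a (i:ℕ) * M m else 0)]
    rw [Finset.sum_eq_single_of_mem (i:ℕ) (Finset.mem_range.mpr (by omega))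
      (fun m _ hm => if_neg (by omega)), if_pos rfl]
  rw [s1, s2]

lemma bisumR (d : ℕ) (j : Fin (d+1)) (c a M : ℕ → ℂ) (hM : M (d+1) = 0) :
    ∑ k : Fin (d+1), M (k:ℕ) * (if (k:ℕ) = (j:ℕ)+1 then c (k:ℕ)
      else if (k:ℕ) = (j:ℕ) then a (k:ℕ) else 0)
    = M (j:ℕ) * a (j:ℕ) + M ((j:ℕ)+1) * c ((j:ℕ)+1) := by
  have hsplit : ∀ k : Fin (d+1),
      M (k:ℕ) * (if (k:ℕ) = (j:ℕ)+1 then c (k:ℕ) else if (k:ℕ) = (j:ℕ) then a (k:ℕ) else 0)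
      = (if (k:ℕ) = (j:ℕ)+1 then M (k:ℕ) * c (k:ℕ) else 0)
        + (if (k:ℕ) = (j:ℕ) then M (k:ℕ) * a (k:ℕ) else 0) :=
    fun k => ifsplit2R (k:ℕ) (j:ℕ) _ _ _
  rw [Finset.sum_congr rfl (fun k _ => hsplit k), Finset.sum_add_distrib]
  have hjd : (j:ℕ) < d + 1 := j.isLt
  have s1 : (∑ k : Fin (d+1), if (k:ℕ) = (j:ℕ)+1 then M (k:ℕ) * c (k:ℕ) else 0)
      = M ((j:ℕ)+1) * c ((j:ℕ)+1) := by
    rw [Fin.sum_univ_eq_sum_range (fun m => if m = (j:ℕ)+1 then M m * c m else 0)]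
    rcases Nat.lt_or_ge ((j:ℕ)+1) (d+1) with hlt | hge
    · rw [Finset.sum_eq_single_of_mem ((j:ℕ)+1) (Finset.mem_range.mpr hlt)
        (fun m _ hm => if_neg hm), if_pos rfl]
    · rw [Finset.sum_eq_zero (fun m hm => if_neg (by
        have := Finset.mem_range.mp hm; omega))]
      rw [show (j:ℕ)+1 = d+1 from by omega, hM]
      ring
  have s2 : (∑ k : Fin (d+1), if (k:ℕ) = (j:ℕ) then M (k:ℕ) * a (k:ℕ) else 0)
      = M (j:ℕ) * a (j:ℕ) := by
    rw [Fin.sum_univ_eq_sum_range (fun m => if m = (j:ℕ) then M m * a m else 0)]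
    rw [Finset.sum_eq_single_of_mem (j:ℕ) (Finset.mem_range.mpr (by omega))
      (fun m _ hm => if_neg hm), if_pos rfl]
  rw [s1, s2]
  ring

lemma theta_strict (q φ : ℝ) (hq : 1 < q) (hφ : 0 < φ) {p1 p2 s1 s2 : ℕ}
    (hp : p2 < p1) (hs : s1 < s2) :
    ((φ:ℂ) * (q:ℂ)^p1 - (q:ℂ)^s1) / ((q:ℂ)-1) ≠ ((φ:ℂ) * (q:ℂ)^p2 - (q:ℂ)^s2) / ((q:ℂ)-1) := by
  have hq1 : (q:ℂ) - 1 ≠ 0 := by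
    simp only [ne_eq, sub_eq_zero]
    exact_mod_cast hq.ne'
  intro h
  rw [div_eq_div_iff hq1 hq1] at h
  have h2 : (φ * q^p1 - q^s1) * (q - 1) = (φ * q^p2 - q^s2) * (q - 1) := by exact_mod_cast h
  have h3 : φ * q^p1 - q^s1 = φ * q^p2 - q^s2 :=
    mul_right_cancel₀ (sub_ne_zero.mpr hq.ne') h2
  have hgt1 : φ * q^p2 < φ * q^p1 := by
    have := pow_lt_pow_right₀ hq hp
    nlinarith
  have hgt2 : q^s1 < q^s2 := pow_lt_pow_right₀ hq hs
  linarith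

lemma master (q φ : ℝ) (hq : 1 < q) (hφ : 0 < φ) (d r N : ℕ) (hNd : N = d + 2*r) :
    ∃ P : Matrix (Fin (d+1)) (Fin (d+1)) ℂ, IsUnit P.det ∧
      P⁻¹ * (show Matrix (Fin (d+1)) (Fin (d+1)) ℂ from fun i j =>
        if (i:ℕ) = (j:ℕ)+1 then ((q:ℂ)^r * ((q:ℂ)^(i:ℕ) - 1) / ((q:ℂ)-1))
        else if (i:ℕ) = (j:ℕ) then (((φ:ℂ)-1)/((q:ℂ)-1)) * (q:ℂ)^((i:ℕ)+r)
        else if (j:ℕ) = (i:ℕ)+1 then (φ:ℂ) * ((q:ℂ)^(N-r) - (q:ℂ)^((i:ℕ)+r)) / ((q:ℂ)-1)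
        else 0) * P
      = Matrix.diagonal (fun i : Fin (d+1) =>
          ((φ:ℂ) * (q:ℂ)^(N-((i:ℕ)+r)) - (q:ℂ)^((i:ℕ)+r)) / ((q:ℂ)-1)) := by
  set cf : ℕ → ℂ := fun m => (q:ℂ)^r * ((q:ℂ)^m - 1) / ((q:ℂ)-1) with hcf
  set thetaD : ℕ → ℂ := fun m => ((φ:ℂ) * (q:ℂ)^((d-m)+r) - (q:ℂ)^(m+r)) / ((q:ℂ)-1) with hth
  have hcf0 : cf 0 = 0 := by simp [hcf]
  have hdist : ∀ a b : ℕ, a ≤ d → b ≤ d → a ≠ b → thetaD a ≠ thetaD b := by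
    intro a b ha hb hab
    rcases Nat.lt_or_ge a b with h | h
    · exact (theta_strict q φ hq hφ (by omega : d - b + r < d - a + r)
        (by omega : a + r < b + r))
    · exact (theta_strict q φ hq hφ (by omega : d - a + r < d - b + r)
        (by omega : b + r < a + r)).symm
  set Bm : Matrix (Fin (d+1)) (Fin (d+1)) ℂ := fun i j =>
      if (i:ℕ) = (j:ℕ)+1 then ((q:ℂ)^r * ((q:ℂ)^(i:ℕ) - 1) / ((q:ℂ)-1))
      else if (i:ℕ) = (j:ℕ) then (((φ:ℂ)-1)/((q:ℂ)-1)) * (q:ℂ)^((i:ℕ)+r)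
      else if (j:ℕ) = (i:ℕ)+1 then (φ:ℂ) * ((q:ℂ)^(N-r) - (q:ℂ)^((i:ℕ)+r)) / ((q:ℂ)-1)
      else 0 with hBm
  set Tm : Matrix (Fin (d+1)) (Fin (d+1)) ℂ := fun i j => Tmat (q:ℂ) (φ:ℂ) d (i:ℕ) (j:ℕ) with hTm
  set Lm : Matrix (Fin (d+1)) (Fin (d+1)) ℂ := fun i j =>
      if (i:ℕ) = (j:ℕ)+1 then cf (i:ℕ) else if (i:ℕ) = (j:ℕ) then thetaD (i:ℕ) else 0 with hLm
  set Sm : Matrix (Fin (d+1)) (Fin (d+1)) ℂ := fun i j => Smat cf thetaD (i:ℕ) (j:ℕ) with hSm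
  set Dm : Matrix (Fin (d+1)) (Fin (d+1)) ℂ := Matrix.diagonal (fun i : Fin (d+1) =>
      ((φ:ℂ) * (q:ℂ)^(N-((i:ℕ)+r)) - (q:ℂ)^((i:ℕ)+r)) / ((q:ℂ)-1)) with hDm
  have hBT : Bm * Tm = Tm * Lm := by
    ext i j
    have hid : (i:ℕ) < d + 1 := i.isLt
    have hjd : (j:ℕ) < d + 1 := j.isLt
    rw [Matrix.mul_apply, Matrix.mul_apply]
    rw [trisum d i (fun m => (q:ℂ)^r * ((q:ℂ)^m - 1) / ((q:ℂ)-1))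
      (fun m => (((φ:ℂ)-1)/((q:ℂ)-1)) * (q:ℂ)^(m+r))
      (fun m => (φ:ℂ) * ((q:ℂ)^(N-r) - (q:ℂ)^(m+r)) / ((q:ℂ)-1))
      (fun m => Tmat (q:ℂ) (φ:ℂ) d m (j:ℕ)) (by simp) (Tmat_zero _ _ (by omega))]
    rw [bisumR d j cf thetaD (fun m => Tmat (q:ℂ) (φ:ℂ) d (i:ℕ) m)
      (Tmat_zero _ _ (by omega))]
    simp only [hcf, hth]
    rw [show N - r = d + r from by omega]
    exact E1 (q:ℂ) (φ:ℂ) d r (i:ℕ) (j:ℕ) (by omega) (by omega)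
  have hLS : Lm * Sm = Sm * Dm := by
    ext i j
    have hid : (i:ℕ) < d + 1 := i.isLt
    have hjd : (j:ℕ) < d + 1 := j.isLt
    rw [Matrix.mul_apply, Matrix.mul_diagonal]
    rw [bisumL d i cf thetaD (fun m => Smat cf thetaD m (j:ℕ)) hcf0]
    rw [show N - ((j:ℕ)+r) = (d-(j:ℕ))+r from by omega]
    exact E2 cf thetaD (i:ℕ) (j:ℕ) hcf0
      (fun hne => hdist _ _ (by omega) (by omega) hne)
  have hTdet : Tm.det = 1 := by
    rw [Matrix.det_of_upperTriangular (by
      intro i j hij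
      exact Tmat_zero _ _ (by
        have : (j:ℕ) < (i:ℕ) := hij
        omega))]
    exact Finset.prod_eq_one (fun i _ => by
      show Tmat (q:ℂ) (φ:ℂ) d (i:ℕ) (i:ℕ) = 1
      rw [Tmat_of _ _ (le_refl _) (by omega), Nat.sub_self]
      simp [qG_zero_right])
  have hSdet : Sm.det = 1 := by
    rw [Matrix.det_of_lowerTriangular Sm (by
      intro i j hij
      have : (i:ℕ) < (j:ℕ) := hij
      exact Smat_upper cf thetaD this)]
    exact Finset.prod_eq_one (fun i _ => Smat_diag cf thetaD (i:ℕ))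
  have hPdet : IsUnit (Tm * Sm).det := by
    rw [Matrix.det_mul, hTdet, hSdet, mul_one]
    exact isUnit_one
  refine ⟨Tm * Sm, hPdet, ?_⟩
  have hBP : Bm * (Tm * Sm) = (Tm * Sm) * Dm := by
    rw [← Matrix.mul_assoc, hBT, Matrix.mul_assoc, hLS, ← Matrix.mul_assoc]
  calc (Tm * Sm)⁻¹ * Bm * (Tm * Sm) = (Tm * Sm)⁻¹ * (Bm * (Tm * Sm)) := by
        rw [Matrix.mul_assoc]
    _ = (Tm * Sm)⁻¹ * ((Tm * Sm) * Dm) := by rw [hBP]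
    _ = Dm := by rw [← Matrix.mul_assoc, Matrix.nonsing_inv_mul _ hPdet, one_mul]

/-- Let `B` be the `(d+1)×(d+1)` tridiagonal matrix with subdiagonal entries
`c_i = q^r (q^i-1)/(q-1)`, diagonal entries `a_i = ((φ-1)/(q-1)) q^{i+r}`, and
superdiagonal entries `b_i = φ (q^{N-r} - q^{i+r})/(q-1)`, where `d = N - 2r`.
Then `B` is multiplicity-free, with eigenvalues
`θ_{i+r} = (φ q^{N-i-r} - q^{i+r})/(q-1)` for `0 ≤ i ≤ d`. -/
theorem stmt_13 (q φ : ℝ) (hq : 1 < q) (hφ : 0 < φ) (N r : ℕ) (hN : 1 ≤ N)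
    (hr : 2 * r ≤ N) :
    let d : ℕ := N - 2 * r
    let B : Matrix (Fin (d + 1)) (Fin (d + 1)) ℂ := fun i j =>
      if (i : ℕ) = (j : ℕ) + 1 then ((q : ℂ) ^ r * ((q : ℂ) ^ (i : ℕ) - 1) / ((q : ℂ) - 1))
      else if (i : ℕ) = (j : ℕ) then (((φ : ℂ) - 1) / ((q : ℂ) - 1)) * (q : ℂ) ^ ((i : ℕ) + r)
      else if (j : ℕ) = (i : ℕ) + 1 then
        (φ : ℂ) * ((q : ℂ) ^ (N - r) - (q : ℂ) ^ ((i : ℕ) + r)) / ((q : ℂ) - 1)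
      else 0
    let θ : ℕ → ℂ := fun j => ((φ : ℂ) * (q : ℂ) ^ (N - j) - (q : ℂ) ^ j) / ((q : ℂ) - 1)
    Function.Injective (fun i : Fin (d + 1) => θ ((i : ℕ) + r)) ∧
    ∃ P : Matrix (Fin (d + 1)) (Fin (d + 1)) ℂ,
      IsUnit P.det ∧
        P⁻¹ * B * P = Matrix.diagonal (fun i : Fin (d + 1) => θ ((i : ℕ) + r)) := by
  intro d B θ
  have hd : d = N - 2 * r := rfl
  constructor
  · intro a b hab
    have hai : (a:ℕ) < d + 1 := a.isLt
    have hbi : (b:ℕ) < d + 1 := b.isLt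
    have hab' : ((φ:ℂ) * (q:ℂ)^(N-((a:ℕ)+r)) - (q:ℂ)^((a:ℕ)+r)) / ((q:ℂ)-1)
        = ((φ:ℂ) * (q:ℂ)^(N-((b:ℕ)+r)) - (q:ℂ)^((b:ℕ)+r)) / ((q:ℂ)-1) := hab
    by_contra hne
    have hvne : (a:ℕ) ≠ (b:ℕ) := fun h => hne (Fin.ext h)
    rcases Nat.lt_or_ge (a:ℕ) (b:ℕ) with h | h
    · exact theta_strict q φ hq hφ (by omega : N-((b:ℕ)+r) < N-((a:ℕ)+r))
        (by omega : (a:ℕ)+r < (b:ℕ)+r) hab'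
    · exact theta_strict q φ hq hφ (by omega : N-((a:ℕ)+r) < N-((b:ℕ)+r))
        (by omega : (b:ℕ)+r < (a:ℕ)+r) hab'.symm
  · obtain ⟨P, hP, hPB⟩ := master q φ hq hφ d r N (by omega)
    exact ⟨P, hP, hPB⟩
end

section
/- In the algebra U_{q^{1/2}}(sl_2) with Chevalley generators K, K^{-1}, E, F (relations KK^{-1}=K^{-1}K=1, KE = qEK, KF = q^{-1}FK, EF - FE = (K - K^{-1})/(q^{1/2} - q^{-1/2})), the elements X = K^{-1} + K^{-1}E(q-1), Y = K, Z = K^{-1} - F q^{-1/2}(q-1) satisfy the equitable relations (qXY - YX)/(q-1) = 1, (qYZ - ZY)/(q-1) = 1, (qZX - XZ)/(q-1) = 1. -/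
/-!
Conjugation by `K` rescales `E` by `q` and `F` by `q⁻¹`, so in each of the three
`q`-commutators every term containing `E` or `F` alone cancels. What survives is
`q - 1` in the first two, and in the third `(q - 1) K⁻²` plus a multiple of
`K⁻¹ (EF - FE) = (s - s⁻¹)⁻¹ (1 - K⁻²)`; the coefficient `s⁻¹ (q - 1)` of `F` in `Z`
is exactly `s - s⁻¹`, which turns this into `q - 1`.
-/

section Chevalley

variable {k A : Type*} [Field k] [Ring A] [Algebra k A] {q : k} {K Kinv E F : A}

theorem mul_inv_eq_smul_inv_mul (hK : K * Kinv = 1) (hK' : Kinv * K = 1) {x : A}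
    (hx : K * x = q • (x * K)) : x * Kinv = q • (Kinv * x) :=
  calc x * Kinv = Kinv * (K * x) * Kinv := by rw [← mul_assoc, hK', one_mul]
    _ = q • (Kinv * x * (K * Kinv)) := by
      rw [hx, mul_smul_comm, smul_mul_assoc, mul_assoc, mul_assoc, mul_assoc]
    _ = q • (Kinv * x) := by rw [hK, mul_one]

theorem qcomm_add_smul_inv_mul (hK : K * Kinv = 1) (hK' : Kinv * K = 1)
    (hKE : K * E = q • (E * K)) (d : k) :
    q • ((Kinv + d • (Kinv * E)) * K) - K * (Kinv + d • (Kinv * E)) = (q - 1) • 1 := by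
  have hE : q • (Kinv * E * K) = E := by
    rw [mul_assoc, ← mul_smul_comm, ← hKE, ← mul_assoc, hK', one_mul]
  calc q • ((Kinv + d • (Kinv * E)) * K) - K * (Kinv + d • (Kinv * E))
      = q • (Kinv * K) + d • (q • (Kinv * E * K)) - K * Kinv - d • (K * Kinv * E) := by
        simp only [add_mul, mul_add, smul_add, smul_mul_assoc, mul_smul_comm, smul_comm q d,
          mul_assoc]
        abel
    _ = (q - 1) • 1 := by rw [hE, hK, hK', one_mul, sub_smul, one_smul]; abel

theorem qcomm_sub_smul (hK : K * Kinv = 1) (hK' : Kinv * K = 1) (hq : q ≠ 0)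
    (hKF : K * F = q⁻¹ • (F * K)) (c : k) :
    q • (K * (Kinv - c • F)) - (Kinv - c • F) * K = (q - 1) • 1 := by
  have hF : q • (K * F) = F * K := by rw [hKF, smul_smul, mul_inv_cancel₀ hq, one_smul]
  calc q • (K * (Kinv - c • F)) - (Kinv - c • F) * K
      = q • (K * Kinv) - c • (q • (K * F)) - Kinv * K + c • (F * K) := by
        simp only [mul_sub, sub_mul, smul_sub, smul_mul_assoc, mul_smul_comm, smul_comm q c]
        abel
    _ = (q - 1) • 1 := by rw [hF, hK, hK', sub_smul, one_smul]; abel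

theorem qcomm_sub_smul_add_smul (hK : K * Kinv = 1) (hK' : Kinv * K = 1) (hq : q ≠ 0)
    (hKE : K * E = q • (E * K)) (hKF : K * F = q⁻¹ • (F * K)) {r : k}
    (hEF : E * F - F * E = r • (K - Kinv)) {c d : k} (hcdr : c * d * r = q - 1) :
    q • ((Kinv - c • F) * (Kinv + d • (Kinv * E)))
      - (Kinv + d • (Kinv * E)) * (Kinv - c • F) = (q - 1) • 1 := by
  have hE : Kinv * E * Kinv = q • (Kinv * Kinv * E) := by
    rw [mul_assoc, mul_inv_eq_smul_inv_mul hK hK' hKE, mul_smul_comm, mul_assoc]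
  have hF : q • (F * Kinv) = Kinv * F := by
    rw [mul_inv_eq_smul_inv_mul hK hK' hKF, smul_smul, mul_inv_cancel₀ hq, one_smul]
  have hKinvEF : Kinv * E * F - Kinv * F * E = r • (1 - Kinv * Kinv) := by
    rw [mul_assoc, mul_assoc, ← mul_sub, hEF, mul_smul_comm, mul_sub, hK']
  calc q • ((Kinv - c • F) * (Kinv + d • (Kinv * E)))
        - (Kinv + d • (Kinv * E)) * (Kinv - c • F)
      = (q - 1) • (Kinv * Kinv) + d • (q • (Kinv * Kinv * E) - Kinv * E * Kinv)
          - c • (q • (F * Kinv) - Kinv * F)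
          + (c * d) • (Kinv * E * F - q • (F * Kinv) * E) := by
        simp only [add_mul, mul_add, sub_mul, mul_sub, smul_add, smul_sub, smul_mul_assoc,
          mul_smul_comm, mul_assoc]
        module
    _ = (q - 1) • 1 := by
      rw [hE, hF, sub_self, hKinvEF, smul_smul, hcdr, sub_self, smul_zero, smul_zero, add_zero,
        sub_zero, smul_sub]
      abel

end Chevalley

theorem stmt_15_general (Alg : Type*) [Ring Alg] [Algebra ℂ Alg]
    (s : ℂ) (q : ℂ) (hq : q = s ^ 2) (hq0 : q ≠ 0) (hq1 : q ≠ 1)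
    (K Kinv E F : Alg)
    (hK : K * Kinv = 1) (hK' : Kinv * K = 1)
    (hKE : K * E = q • (E * K)) (hKF : K * F = q⁻¹ • (F * K))
    (hEF : E * F - F * E = (s - s⁻¹)⁻¹ • (K - Kinv)) :
    let X : Alg := Kinv + (q - 1) • (Kinv * E)
    let Y : Alg := K
    let Z : Alg := Kinv - (s⁻¹ * (q - 1)) • F
    (q - 1)⁻¹ • (q • (X * Y) - Y * X) = 1 ∧
    (q - 1)⁻¹ • (q • (Y * Z) - Z * Y) = 1 ∧
    (q - 1)⁻¹ • (q • (Z * X) - X * Z) = 1 := by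
  intro X Y Z
  have hq1' : q - 1 ≠ 0 := sub_ne_zero.mpr hq1
  have hs : s ≠ 0 := by rintro rfl; simp [hq] at hq0
  have hc : s⁻¹ * (q - 1) = s - s⁻¹ := by rw [hq]; field_simp
  have hcdr : s⁻¹ * (q - 1) * (q - 1) * (s - s⁻¹)⁻¹ = q - 1 := by
    rw [← hc, mul_right_comm, mul_inv_cancel₀ (mul_ne_zero (inv_ne_zero hs) hq1'), one_mul]
  refine ⟨?_, ?_, ?_⟩
  · rw [qcomm_add_smul_inv_mul hK hK' hKE, inv_smul_smul₀ hq1']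
  · rw [qcomm_sub_smul hK hK' hq0 hKF, inv_smul_smul₀ hq1']
  · rw [qcomm_sub_smul_add_smul hK hK' hq0 hKE hKF hEF hcdr, inv_smul_smul₀ hq1']

/-- In any associative unital `ℂ`-algebra, if `K, K⁻¹, E, F` satisfy the Chevalley
relations of `U_{q^{1/2}}(sl₂)` (`KK⁻¹ = K⁻¹K = 1`, `KE = qEK`, `KF = q⁻¹FK`,
`EF - FE = (K - K⁻¹)/(q^{1/2} - q^{-1/2})`), then
`X = K⁻¹ + K⁻¹E(q-1)`, `Y = K`, `Z = K⁻¹ - F q^{-1/2}(q-1)` satisfy the equitable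
relations `(qXY - YX)/(q-1) = 1`, `(qYZ - ZY)/(q-1) = 1`, `(qZX - XZ)/(q-1) = 1`. -/
theorem stmt_15 (Alg : Type*) [Ring Alg] [Algebra ℂ Alg]
    (s : ℂ) (hs : s ≠ 0) (q : ℂ) (hq : q = s ^ 2) (hq0 : q ≠ 0) (hq1 : q ≠ 1)
    (K Kinv E F : Alg)
    (hK : K * Kinv = 1) (hK' : Kinv * K = 1)
    (hKE : K * E = q • (E * K)) (hKF : K * F = q⁻¹ • (F * K))
    (hEF : E * F - F * E = (s - s⁻¹)⁻¹ • (K - Kinv)) :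
    let X : Alg := Kinv + (q - 1) • (Kinv * E)
    let Y : Alg := K
    let Z : Alg := Kinv - (s⁻¹ * (q - 1)) • F
    (q - 1)⁻¹ • (q • (X * Y) - Y * X) = 1 ∧
    (q - 1)⁻¹ • (q • (Y * Z) - Z * Y) = 1 ∧
    (q - 1)⁻¹ • (q • (Z * X) - X * Z) = 1 :=
  stmt_15_general Alg s q hq hq0 hq1 K Kinv E F hK hK' hKE hKF hEF
end

section
/- With A* the diagonal matrix with (y,y)-entry q^{-dim y} and y^{↓↓} = ∑_{z ≤ y} ẑ, one has A* y^{↓↓} = q^{-dim y} y^{↓↓} + (q-1) q^{-dim y} ∑_{z : y covers z} z^{↓↓} for every subspace y. -/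
open Matrix

noncomputable section
open scoped Classical

variable (F : Type) [Field F] [Fintype F] (N : ℕ)

/-- `y^{↓↓} = ∑_{z ≤ y} ẑ` in `V = ℂ^X`. -/
def dd (y : X F N) : X F N → ℂ :=
  ∑ z ∈ Finset.univ.filter (fun z : X F N => z ≤ y), Pi.single z (1 : ℂ)

section Aux

open Module

variable {U : Type} [AddCommGroup U] [Module F U] [FiniteDimensional F U] [Finite U]

lemma ker_fiber_card (p : Submodule F U) (hp : finrank F p + 1 = finrank F U) :
    Nat.card {f : Module.Dual F U // LinearMap.ker f = p} = Fintype.card F - 1 := by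
  have hq1 : finrank F (U ⧸ p) = 1 := by
    have := Submodule.finrank_quotient_add_finrank p
    omega
  let e : (U ⧸ p) ≃ₗ[F] F := LinearEquiv.ofFinrankEq _ _ (by simp [hq1])
  set f₀ : Module.Dual F U := e.toLinearMap ∘ₗ p.mkQ with hf₀
  have hker₀ : LinearMap.ker f₀ = p := by
    rw [hf₀, LinearMap.ker_comp, LinearEquiv.ker, Submodule.comap_bot, Submodule.ker_mkQ]
  have hs : Function.Surjective f₀ := e.surjective.comp (Submodule.mkQ_surjective p)
  obtain ⟨u, hu⟩ := hs 1
  have key : ∀ f : Module.Dual F U, LinearMap.ker f = p → f = (f u) • f₀ := by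
    intro f hf
    ext x
    have hmem : x - (f₀ x) • u ∈ LinearMap.ker f₀ := by
      simp [LinearMap.mem_ker, map_sub, _root_.map_smul, hu, smul_eq_mul]
    rw [hker₀, ← hf, LinearMap.mem_ker, map_sub, _root_.map_smul, sub_eq_zero, smul_eq_mul] at hmem
    simp [hmem, smul_eq_mul, mul_comm]
  have e2 : {f : Module.Dual F U // LinearMap.ker f = p} ≃ {c : F // c ≠ 0} :=
    { toFun := fun f => ⟨f.1 u, by
        intro h0
        have : u ∈ LinearMap.ker f.1 := by simp [LinearMap.mem_ker, h0]
        rw [f.2, ← hker₀] at this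
        rw [LinearMap.mem_ker] at this
        rw [this] at hu
        exact one_ne_zero hu.symm⟩
      invFun := fun c => ⟨c.1 • f₀, by
        ext x
        simp only [LinearMap.mem_ker, LinearMap.smul_apply, smul_eq_mul,
          mul_eq_zero, c.2, false_or]
        rw [← LinearMap.mem_ker, hker₀]⟩
      left_inv := fun f => Subtype.ext (key f.1 f.2).symm
      right_inv := fun c => Subtype.ext (by simp [hu]) }
  rw [Nat.card_congr e2]
  rw [Nat.card_eq_fintype_card]
  have := Fintype.card_subtype_compl (p := fun c : F => c = 0)
  simp only [Fintype.card_subtype_eq] at this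
  simpa using this

lemma hyp_count (W : Submodule F U) :
    (Fintype.card F - 1) *
      Nat.card {p : Submodule F U // W ≤ p ∧ finrank F p + 1 = finrank F U} + 1
      = Fintype.card F ^ (finrank F U - finrank F W) := by
  haveI : Finite (Module.Dual F U) :=
    Finite.of_injective (fun f => (f : U → F)) DFunLike.coe_injective
  letI : Fintype (Module.Dual F U) := Fintype.ofFinite _
  letI : Fintype (Submodule F U) := Fintype.ofFinite _
  set T : Finset (Module.Dual F U) :=
    Finset.univ.filter (fun f => W ≤ LinearMap.ker f ∧ f ≠ 0) with hTdef
  set S : Finset (Submodule F U) :=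
    Finset.univ.filter (fun p => W ≤ p ∧ finrank F p + 1 = finrank F U) with hSdef
  have hrank : ∀ f : Module.Dual F U, f ≠ 0 →
      finrank F (LinearMap.ker f) + 1 = finrank F U := by
    intro f hf
    have h1 : LinearMap.range f = ⊤ := by
      rcases eq_bot_or_eq_top (LinearMap.range f) with h | h
      · exact absurd (LinearMap.range_eq_bot.mp h) hf
      · exact h
    have := LinearMap.finrank_range_add_finrank_ker f
    rw [h1, finrank_top, Module.finrank_self] at this
    omega
  have hmaps : ∀ f ∈ T, LinearMap.ker f ∈ S := by
    intro f hf
    rw [hTdef, Finset.mem_filter] at hf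
    rw [hSdef, Finset.mem_filter]
    exact ⟨Finset.mem_univ _, hf.2.1, hrank f hf.2.2⟩
  have hfiber : ∀ p ∈ S, (T.filter (fun f => LinearMap.ker f = p)).card
      = Fintype.card F - 1 := by
    intro p hp
    rw [hSdef, Finset.mem_filter] at hp
    have hptop : p ≠ ⊤ := by
      intro h
      rw [h] at hp
      have : finrank F (⊤ : Submodule F U) = finrank F U := finrank_top F U
      omega
    have : T.filter (fun f => LinearMap.ker f = p)
        = Finset.univ.filter (fun f : Module.Dual F U => LinearMap.ker f = p) := by
      ext f
      simp only [hTdef, Finset.mem_filter, Finset.mem_univ, true_and, Finset.filter_filter]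
      constructor
      · rintro ⟨⟨-, -⟩, h⟩; exact h
      · intro h
        refine ⟨⟨h ▸ hp.2.1, ?_⟩, h⟩
        intro h0
        rw [h0, LinearMap.ker_zero] at h
        exact hptop h.symm
    rw [this, ← Fintype.card_subtype, ← Nat.card_eq_fintype_card]
    exact ker_fiber_card F p hp.2.2
  have hT : T.card = S.card * (Fintype.card F - 1) := by
    rw [Finset.card_eq_sum_card_fiberwise hmaps,
      Finset.sum_congr rfl hfiber, Finset.sum_const, smul_eq_mul]
  -- now relate T.card to the dual annihilator
  set D : Submodule F (Module.Dual F U) := W.dualAnnihilator with hDdef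
  have hmemD : ∀ f : Module.Dual F U, f ∈ D ↔ W ≤ LinearMap.ker f := by
    intro f
    rw [hDdef, Submodule.mem_dualAnnihilator]
    constructor
    · intro h x hx; exact LinearMap.mem_ker.mpr (h x hx)
    · intro h x hx; exact LinearMap.mem_ker.mp (h hx)
  have hins : Finset.univ.filter (fun f : Module.Dual F U => f ∈ D) = insert 0 T := by
    ext f
    simp only [Finset.mem_filter, Finset.mem_univ, true_and, Finset.mem_insert,
      hTdef, hmemD]
    by_cases hf : f = 0
    · simp [hf]
    · simp [hf]
  have h0T : (0 : Module.Dual F U) ∉ T := by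
    simp [hTdef]
  have hDrank : finrank F D = finrank F U - finrank F W := by
    have h1 : finrank F D = finrank F (U ⧸ W) :=
      (LinearEquiv.finrank_eq (Subspace.quotEquivAnnihilator W)).symm
    have h2 := Submodule.finrank_quotient_add_finrank W
    omega
  have hDcard : (Finset.univ.filter (fun f : Module.Dual F U => f ∈ D)).card
      = Fintype.card F ^ (finrank F U - finrank F W) := by
    rw [← Fintype.card_subtype]
    have : Fintype.card {f : Module.Dual F U // f ∈ D} = Fintype.card D := by
      rw [← Nat.card_eq_fintype_card]
    rw [this, card_eq_pow_finrank (K := F) (V := D), hDrank]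
  rw [hins, Finset.card_insert_of_notMem h0T, hT] at hDcard
  have hScard : Nat.card {p : Submodule F U // W ≤ p ∧ finrank F p + 1 = finrank F U}
      = S.card := by
    rw [Nat.card_eq_fintype_card, Fintype.card_subtype]
  rw [hScard, mul_comm]
  exact hDcard

end Aux

open Module in
lemma covers_count (y w : X F N) (hw : w ≤ y) :
    (Fintype.card F - 1) * Nat.card {z : X F N // Covers F N y z ∧ w ≤ z} + 1
      = Fintype.card F ^ (dimS F N y - dimS F N w) := by
  set W : Submodule F ↥y := w.comap y.subtype with hW
  have hmapW : W.map y.subtype = w := by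
    rw [hW, Submodule.map_comap_subtype]
    exact inf_eq_right.mpr hw
  have hWrank : finrank F W = dimS F N w := by
    rw [dimS, ← hmapW, Submodule.finrank_map_subtype_eq]
  have e : {p : Submodule F ↥y // W ≤ p ∧ finrank F p + 1 = finrank F ↥y}
      ≃ {z : X F N // Covers F N y z ∧ w ≤ z} :=
    { toFun := fun p => ⟨p.1.map y.subtype, by
        refine ⟨⟨Submodule.map_subtype_le y p.1, ?_⟩, ?_⟩
        · show finrank F ↥y = dimS F N (p.1.map y.subtype) + 1
          rw [dimS, Submodule.finrank_map_subtype_eq]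
          exact p.2.2.symm
        · rw [← hmapW]
          exact Submodule.map_mono p.2.1⟩
      invFun := fun z => ⟨z.1.comap y.subtype, by
        have hzy : z.1 ≤ y := z.2.1.1
        have hmapz : (z.1.comap y.subtype).map y.subtype = z.1 := by
          rw [Submodule.map_comap_subtype]
          exact inf_eq_right.mpr hzy
        refine ⟨Submodule.comap_mono z.2.2, ?_⟩
        have h1 := Submodule.finrank_map_subtype_eq y (z.1.comap y.subtype)
        rw [hmapz] at h1
        have h2 : finrank F ↥y = finrank F z.1 + 1 := z.2.1.2
        omega⟩
      left_inv := fun p => Subtype.ext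
        (Submodule.comap_map_eq_of_injective y.injective_subtype p.1)
      right_inv := fun z => Subtype.ext (by
        have hzy : z.1 ≤ y := z.2.1.1
        show (z.1.comap y.subtype).map y.subtype = z.1
        rw [Submodule.map_comap_subtype]
        exact inf_eq_right.mpr hzy) }
  rw [← Nat.card_congr e]
  have := hyp_count F (U := ↥y) W
  rwa [hWrank] at this

lemma dd_apply (y x : X F N) : dd F N y x = if x ≤ y then 1 else 0 := by
  rw [dd, Finset.sum_apply]
  simp [Pi.single_apply, Finset.sum_ite_eq]

/-- With `A*` diagonal with `(y,y)`-entry `q^{-dim y}`: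
`A* y^{↓↓} = q^{-dim y} y^{↓↓} + (q-1) q^{-dim y} ∑_{y covers z} z^{↓↓}`. -/
theorem stmt_19 (hN : 1 ≤ N) :
    let q : ℂ := (Fintype.card F : ℂ)
    ∀ y : X F N,
      (Astar F N).mulVec (dd F N y) =
        (q ^ (-(dimS F N y : ℤ))) • dd F N y +
          ((q - 1) * q ^ (-(dimS F N y : ℤ))) •
            ∑ z ∈ Finset.univ.filter (fun z : X F N => Covers F N y z), dd F N z := by
  intro q y
  funext x
  have hq0 : q ≠ 0 := Nat.cast_ne_zero.mpr Fintype.card_ne_zero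
  have hq1 : 1 ≤ Fintype.card F := Fintype.card_pos
  simp only [Astar, Matrix.mulVec_diagonal, Pi.add_apply, Pi.smul_apply, smul_eq_mul,
    Finset.sum_apply]
  rw [dd_apply]
  have hsum : ∑ z ∈ Finset.univ.filter (fun z : X F N => Covers F N y z), dd F N z x
      = ((Finset.univ.filter (fun z : X F N => Covers F N y z ∧ x ≤ z)).card : ℂ) := by
    simp only [dd_apply]
    rw [Finset.sum_boole, Finset.filter_filter]
  rw [hsum]
  have hcard : ((Finset.univ.filter (fun z : X F N => Covers F N y z ∧ x ≤ z)).card : ℕ)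
      = Nat.card {z : X F N // Covers F N y z ∧ x ≤ z} := by
    rw [Nat.card_eq_fintype_card, Fintype.card_subtype]
  by_cases hxy : x ≤ y
  · rw [if_pos hxy]
    have key := covers_count F N y x hxy
    have hle : dimS F N x ≤ dimS F N y := Submodule.finrank_mono hxy
    set c : ℕ := Nat.card {z : X F N // Covers F N y z ∧ x ≤ z} with hc
    rw [← hcard] at hc
    rw [hc]
    have keyC : (q - 1) * (c : ℂ) + 1 = q ^ (dimS F N y - dimS F N x) := by
      have h := congrArg (fun n : ℕ => (n : ℂ)) key
      simp only [Nat.cast_add, Nat.cast_mul, Nat.cast_sub hq1, Nat.cast_pow,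
        Nat.cast_one] at h
      exact h
    have hzk : (-(dimS F N x : ℤ)) = -(dimS F N y : ℤ) + ((dimS F N y - dimS F N x : ℕ) : ℤ) := by
      omega
    rw [hzk, zpow_add₀ hq0, zpow_natCast]
    linear_combination (-(q ^ (-(dimS F N y : ℤ)))) * keyC
  · rw [if_neg hxy]
    have hempty : Finset.univ.filter (fun z : X F N => Covers F N y z ∧ x ≤ z) = ∅ := by
      ext z
      simp only [Finset.mem_filter, Finset.mem_univ, true_and, Finset.notMem_empty,
        iff_false, not_and]
      intro hcz hxz
      exact hxy (hxz.trans hcz.1)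
    rw [hempty]
    simp

end
end
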